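/- arXiv:1206.0694 — 10 statements merged into one kernel-verified Lean document; each statement's English description precedes it below -/
import Mathlib

section
/- Let Ω be a locally compact Hausdorff space and let 𝒞 = C₀(Ω, ℂ) be the Banach algebra of continuous complex-valued functions on Ω vanishing at infinity (with pointwise operations and the sup norm). Then every derivation δ : 𝒞 → 𝒞 (not assumed continuous) is identically zero. -/
/-!
For a character `χ` of an algebra and a Leibniz map `δ`, `χ (δ (b * c)) = 0` whenever
`χ b = χ c = 0`. Evaluation at a point `x` is a character of `C₀(Ω, ℂ)` whose kernel consists of
such products: `f = √|f| · (f / √|f|)`. Finally `a * a - χ a • a` also lies in the kernel, and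
applying `χ ∘ δ` to it gives `χ a * χ (δ a) = 0`, so `χ (δ a) = 0` even when `χ a ≠ 0`.
-/

open scoped ZeroAtInfty

namespace ZeroAtInftyContinuousMap

variable {α β γ : Type*} [TopologicalSpace α]

@[simps]
def compLeft [Zero β] [TopologicalSpace β] [Zero γ] [TopologicalSpace γ]
    (φ : C(β, γ)) (hφ : φ 0 = 0) (f : C₀(α, β)) : C₀(α, γ) where
  toFun := φ ∘ f
  continuous_toFun := φ.continuous.comp f.continuous
  zero_at_infty' := by
    simpa [hφ] using (φ.continuous.tendsto 0).comp (zero_at_infty f)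

@[simps]
def evalNonUnitalAlgHom (R : Type*) [Semiring R] [NonUnitalNonAssocSemiring β]
    [TopologicalSpace β] [IsTopologicalSemiring β] [Module R β] [ContinuousConstSMul R β]
    (x : α) : C₀(α, β) →ₙₐ[R] β where
  toFun f := f x
  map_smul' _ _ := rfl
  map_zero' := rfl
  map_add' _ _ := rfl
  map_mul' _ _ := rfl

end ZeroAtInftyContinuousMap

theorem RCLike.continuous_div_sqrt_norm {𝕜 : Type*} [RCLike 𝕜] :
    Continuous fun z : 𝕜 => z / (√‖z‖ : 𝕜) := by
  have hnorm : ∀ z : 𝕜, ‖z / (√‖z‖ : 𝕜)‖ = √‖z‖ := fun z => by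
    rw [norm_div, RCLike.norm_ofReal, abs_of_nonneg (Real.sqrt_nonneg _), Real.div_sqrt]
  refine continuous_iff_continuousAt.2 fun z => ?_
  rcases eq_or_ne z 0 with rfl | hz
  · rw [ContinuousAt, zero_div, tendsto_zero_iff_norm_tendsto_zero]
    simpa only [hnorm, norm_zero, Real.sqrt_zero] using (continuous_norm (E := 𝕜)).sqrt.tendsto 0
  · exact continuousAt_id.div (by fun_prop) (by simpa using hz)

theorem ZeroAtInftyContinuousMap.exists_mul_eq_of_apply_eq_zero {α 𝕜 : Type*}
    [TopologicalSpace α] [RCLike 𝕜] {f : C₀(α, 𝕜)} {x : α} (hfx : f x = 0) :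
    ∃ g h : C₀(α, 𝕜), g x = 0 ∧ h x = 0 ∧ g * h = f := by
  refine ⟨compLeft ⟨fun z => (√‖z‖ : 𝕜), by fun_prop⟩ (by simp) f,
    compLeft ⟨_, RCLike.continuous_div_sqrt_norm⟩ (by simp) f, by simp [hfx], by simp [hfx], ?_⟩
  ext y
  exact mul_div_cancel_of_imp' fun h => by simpa using h

theorem NonUnitalAlgHom.apply_leibniz_eq_zero_of_ker_mul {𝕜 A : Type*} [CommRing 𝕜]
    [NoZeroDivisors 𝕜] [NonUnitalRing A] [Module 𝕜 A] (χ : A →ₙₐ[𝕜] 𝕜) {δ : A →ₗ[𝕜] A}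
    (hδ : ∀ a b, δ (a * b) = δ a * b + a * δ b)
    (hker : ∀ a, χ a = 0 → ∃ b c, χ b = 0 ∧ χ c = 0 ∧ b * c = a) (a : A) : χ (δ a) = 0 := by
  have hδker : ∀ a, χ a = 0 → χ (δ a) = 0 := fun a ha => by
    obtain ⟨b, c, hb, hc, rfl⟩ := hker a ha
    simp [hδ, hb, hc]
  by_cases ha : χ a = 0
  · exact hδker a ha
  have hsq := hδker (a * a - χ a • a) (by simp)
  simp only [map_sub, map_smul, hδ, map_add, map_mul, smul_eq_mul] at hsq
  exact (mul_eq_zero.1 (by linear_combination hsq)).resolve_left ha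

theorem no_derivations_on_C0_general (Ω : Type*) [TopologicalSpace Ω] (δ : C₀(Ω, ℂ) →ₗ[ℂ] C₀(Ω, ℂ))
    (hδ : ∀ f g : C₀(Ω, ℂ), δ (f * g) = δ f * g + f * δ g) :
    δ = 0 := by
  ext f x
  exact (ZeroAtInftyContinuousMap.evalNonUnitalAlgHom ℂ x).apply_leibniz_eq_zero_of_ker_mul hδ
    (fun g hg => ZeroAtInftyContinuousMap.exists_mul_eq_of_apply_eq_zero hg) f

/-- There are no nonzero derivations on the Banach algebra `C₀(Ω, ℂ)` of continuous
complex-valued functions vanishing at infinity on a locally compact Hausdorff space `Ω`. -/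
theorem no_derivations_on_C0 (Ω : Type*) [TopologicalSpace Ω] [LocallyCompactSpace Ω]
    [T2Space Ω] (δ : C₀(Ω, ℂ) →ₗ[ℂ] C₀(Ω, ℂ))
    (hδ : ∀ f g : C₀(Ω, ℂ), δ (f * g) = δ f * g + f * δ g) :
    δ = 0 :=
  no_derivations_on_C0_general Ω δ hδ
end

section
/- (Singer–Wermer) Let A be a commutative semisimple complex Banach algebra. Then every continuous derivation δ : A → A is identically zero. -/
/-!
For a derivation `δ`, both `exp (z • δ) (a * b)` and `exp (z • δ) a * exp (z • δ) b` solve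
`v' = δ v` with the same initial value, so every `exp (z • δ)` is an algebra endomorphism.
Hence for a character `φ` the entire function `z ↦ φ (exp (z • δ) a)` takes values in the
spectrum of `a`; being bounded, it is constant by Liouville, and its derivative at `0` is
`φ (δ a)`. So `δ a` lies in the kernel of every character, i.e. (Gelfand–Mazur) in every maximal
ideal, i.e. in the Jacobson radical, which is zero.
-/

open NormedSpace

section LinearODE

variable {𝕂 E : Type*} [RCLike 𝕂] [NormedAddCommGroup E] [NormedSpace 𝕂 E]

@[simp]
theorem exp_zero_smul_apply (T : E →L[𝕂] E) (x : E) : exp ((0 : 𝕂) • T) x = x := by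
  rw [zero_smul 𝕂 T, exp_zero, one_apply_eq_self]

variable [CompleteSpace E]

theorem hasDerivAt_exp_smul_apply (T : E →L[𝕂] E) (x : E) (w : 𝕂) :
    HasDerivAt (fun u : 𝕂 => exp (u • T) x) (T (exp (w • T) x)) w := by
  simpa using (hasDerivAt_exp_smul_const' T w).clm_apply (hasDerivAt_const w x)

theorem eq_zero_of_hasDerivAt_apply_self (T : E →L[𝕂] E) {v : 𝕂 → E}
    (hv : ∀ z, HasDerivAt v (T (v z)) z) (hv0 : v 0 = 0) (z : 𝕂) : v z = 0 := by
  have hderiv : ∀ w, HasDerivAt (fun u : 𝕂 => exp (u • -T) (v u)) 0 w := fun w => by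
    simpa using (hasDerivAt_exp_smul_const (-T) w).clm_apply (hv w)
  have hconst : exp (z • -T) (v z) = 0 := by
    simpa [hv0] using is_const_of_deriv_eq_zero (fun w => (hderiv w).differentiableAt)
      (fun w => (hderiv w).deriv) z 0
  have hinv : exp (z • T) * exp (z • -T) = 1 := by
    rw [← exp_add_of_commute_of_mem_ball (𝕂 := 𝕂)
      ((Commute.refl T).neg_right.smul_left z |>.smul_right z) (by simp [expSeries_radius_eq_top])
      (by simp [expSeries_radius_eq_top]), smul_neg, add_neg_cancel, exp_zero]
  calc v z = (exp (z • T) * exp (z • -T)) (v z) := by rw [hinv]; rfl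
    _ = 0 := by rw [mul_apply_eq_comp, hconst, map_zero]

end LinearODE

section Leibniz

variable {𝕂 A : Type*} [RCLike 𝕂] [NormedRing A] [NormedAlgebra 𝕂 A] [CompleteSpace A]
  (δ : A →L[𝕂] A)

theorem exp_smul_apply_one (hδ : δ 1 = 0) (z : 𝕂) : exp (z • δ) 1 = 1 :=
  sub_eq_zero.mp <| eq_zero_of_hasDerivAt_apply_self δ (v := fun u => exp (u • δ) 1 - 1)
    (fun u => by simpa [hδ] using (hasDerivAt_exp_smul_apply δ 1 u).sub_const 1) (by simp) z

theorem exp_smul_apply_mul (hδ : ∀ a b : A, δ (a * b) = δ a * b + a * δ b) (z : 𝕂) (a b : A) :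
    exp (z • δ) (a * b) = exp (z • δ) a * exp (z • δ) b := by
  refine sub_eq_zero.mp <| eq_zero_of_hasDerivAt_apply_self δ
    (v := fun u => exp (u • δ) (a * b) - exp (u • δ) a * exp (u • δ) b) (fun u => ?_) (by simp) z
  rw [map_sub, hδ]
  exact (hasDerivAt_exp_smul_apply δ (a * b) u).sub
    ((hasDerivAt_exp_smul_apply δ a u).mul (hasDerivAt_exp_smul_apply δ b u))

noncomputable def expSmulAlgHom (hδ : ∀ a b : A, δ (a * b) = δ a * b + a * δ b) (z : 𝕂) :
    A →ₐ[𝕂] A :=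
  AlgHom.ofLinearMap (exp (z • δ) : A →L[𝕂] A).toLinearMap
    (exp_smul_apply_one δ (by simpa using hδ 1 1) z) (exp_smul_apply_mul δ hδ z)

end Leibniz

theorem algHom_apply_eq_zero_of_leibniz {A : Type*} [NormedRing A] [NormedAlgebra ℂ A]
    [CompleteSpace A] (δ : A →L[ℂ] A) (hδ : ∀ a b : A, δ (a * b) = δ a * b + a * δ b)
    (φ : A →ₐ[ℂ] ℂ) (a : A) : φ (δ a) = 0 := by
  set f : ℂ → ℂ := fun z => φ (exp (z • δ) a)
  have hderiv : ∀ z, HasDerivAt f (φ (δ (exp (z • δ) a))) z := fun z =>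
    φ.toContinuousLinearMap.hasFDerivAt.comp_hasDerivAt z (hasDerivAt_exp_smul_apply δ a z)
  have hbdd : Bornology.IsBounded (Set.range f) := by
    refine isBounded_iff_forall_norm_le.mpr ⟨‖a‖ * ‖(1 : A)‖, ?_⟩
    rintro _ ⟨z, rfl⟩
    exact spectrum.norm_le_norm_mul_of_mem
      (AlgHom.apply_mem_spectrum (φ.comp (expSmulAlgHom δ hδ z)) a)
  have hdiff : Differentiable ℂ f := fun z => (hderiv z).differentiableAt
  have hconst : f = fun _ => f 0 := funext fun z => hdiff.apply_eq_apply_of_bounded hbdd z 0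
  have h0 : deriv f 0 = 0 := by rw [hconst, deriv_const]
  rwa [(hderiv 0).deriv, exp_zero_smul_apply] at h0

theorem mem_jacobson_bot_of_forall_algHom_apply_eq_zero {A : Type*} [NormedCommRing A]
    [NormedAlgebra ℂ A] [CompleteSpace A] {x : A} (hx : ∀ φ : A →ₐ[ℂ] ℂ, φ x = 0) :
    x ∈ (⊥ : Ideal A).jacobson := by
  refine Ideal.mem_sInf.mpr ?_
  rintro J ⟨-, hJ⟩
  let φ := WeakDual.CharacterSpace.equivAlgHom J.toCharacterSpace
  have hker : J = RingHom.ker φ :=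
    hJ.eq_of_le (RingHom.ker_ne_top φ) fun y hy => J.toCharacterSpace_apply_eq_zero_of_mem hy
  rw [hker, RingHom.mem_ker]
  exact hx φ

/-- (Singer–Wermer) Every continuous derivation on a commutative semisimple complex
Banach algebra is identically zero. -/
theorem singer_wermer (A : Type*) [NormedCommRing A] [NormedAlgebra ℂ A] [CompleteSpace A]
    (hss : (⊥ : Ideal A).jacobson = ⊥)
    (δ : A →L[ℂ] A)
    (hδ : ∀ a b : A, δ (a * b) = δ a * b + a * δ b) :
    δ = 0 := by
  ext a
  have hrad : δ a ∈ (⊥ : Ideal A).jacobson :=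
    mem_jacobson_bot_of_forall_algHom_apply_eq_zero (algHom_apply_eq_zero_of_leibniz δ hδ · a)
  rwa [hss, Ideal.mem_bot] at hrad
end

section
/- Every derivation of the matrix algebra M_n(ℂ) is inner: if δ : M_n(ℂ) → M_n(ℂ) is a ℂ-linear map satisfying δ(XY) = δ(X)Y + Xδ(Y) for all X, Y ∈ M_n(ℂ), then there exists a matrix A ∈ M_n(ℂ) such that δ(X) = AX − XA for all X ∈ M_n(ℂ). -/
/-!
`Mₙ(K)` is a separable algebra: `p = ∑ₖ E_{k0} ⊗ E_{0k}` satisfies `∑ₖ E_{k0} E_{0k} = 1` and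
`(x ⊗ 1) p = p (1 ⊗ x)`. Applying `a ⊗ b ↦ δ a * b` to this balance identity and expanding with
the Leibniz rule gives `δ x + x A = A x` for `A = ∑ₖ δ(E_{k0}) E_{0k}`.
-/

open Matrix TensorProduct

namespace Algebra

variable {K R : Type*} [CommSemiring K] [Semiring R] [Algebra K R]

def IsSeparabilityIdempotent (p : R ⊗[K] R) : Prop :=
  LinearMap.mul' K R p = 1 ∧ ∀ x : R, (x ⊗ₜ[K] 1) * p = p * (1 ⊗ₜ[K] x)

end Algebra

section Derivation

variable {K R : Type*} [CommSemiring K] [Semiring R] [Algebra K R] (δ : R →ₗ[K] R)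

theorem mul'_map_tmul_one_mul (hδ : ∀ x y, δ (x * y) = δ x * y + x * δ y) (x : R)
    (q : R ⊗[K] R) :
    LinearMap.mul' K R (map δ LinearMap.id ((x ⊗ₜ 1) * q)) =
      δ x * LinearMap.mul' K R q + x * LinearMap.mul' K R (map δ LinearMap.id q) := by
  induction q using TensorProduct.induction_on with
  | zero => simp
  | tmul a b => simp [Algebra.TensorProduct.tmul_mul_tmul, hδ, add_mul, mul_assoc]
  | add q r hq hr => simp only [mul_add, map_add, hq, hr]; abel

theorem mul'_map_mul_one_tmul (x : R) (q : R ⊗[K] R) :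
    LinearMap.mul' K R (map δ LinearMap.id (q * (1 ⊗ₜ x))) =
      LinearMap.mul' K R (map δ LinearMap.id q) * x := by
  induction q using TensorProduct.induction_on with
  | zero => simp
  | tmul a b => simp [Algebra.TensorProduct.tmul_mul_tmul, mul_assoc]
  | add q r hq hr => simp only [add_mul, map_add, hq, hr]

end Derivation

theorem Algebra.IsSeparabilityIdempotent.exists_eq_mul_sub_mul {K R : Type*} [CommSemiring K]
    [Ring R] [Algebra K R] {p : R ⊗[K] R} (hp : IsSeparabilityIdempotent p) (δ : R →ₗ[K] R)
    (hδ : ∀ x y, δ (x * y) = δ x * y + x * δ y) :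
    ∃ a : R, ∀ x, δ x = a * x - x * a := by
  refine ⟨LinearMap.mul' K R (map δ LinearMap.id p), fun x => ?_⟩
  have balanced := congrArg (fun q => LinearMap.mul' K R (map δ LinearMap.id q)) (hp.2 x)
  simp only [mul'_map_tmul_one_mul δ hδ, mul'_map_mul_one_tmul, hp.1, mul_one] at balanced
  exact eq_sub_of_add_eq balanced

theorem Matrix.isSeparabilityIdempotent_sum_single {K m : Type*} [CommSemiring K] [Fintype m]
    [DecidableEq m] (i : m) :
    Algebra.IsSeparabilityIdempotent (∑ k, single k i (1 : K) ⊗ₜ[K] single i k (1 : K)) := by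
  constructor
  · simp [sum_single_one]
  · intro x
    induction x using Matrix.induction_on' with
    | h_zero => simp
    | h_add p q hp hq => simp only [add_tmul, tmul_add, add_mul, mul_add, hp, hq]
    | h_std_basis a b c =>
      simp only [Finset.mul_sum, Finset.sum_mul, Algebra.TensorProduct.tmul_mul_tmul, mul_one,
        one_mul]
      rw [Finset.sum_eq_single b (fun k _ hk => by simp [Ne.symm hk]) (by simp),
        Finset.sum_eq_single a (fun k _ hk => by simp [hk]) (by simp)]
      have single_eq_smul (j k : m) : single j k c = c • single j k (1 : K) := by
        rw [smul_single, smul_eq_mul, mul_one]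
      rw [single_mul_single_same, single_mul_single_same, mul_one, one_mul, single_eq_smul a i,
        single_eq_smul i b, smul_tmul]

/-- Every derivation of the matrix algebra `Mₙ(ℂ)` is inner. -/
theorem matrix_derivation_inner (n : ℕ)
    (δ : Matrix (Fin n) (Fin n) ℂ →ₗ[ℂ] Matrix (Fin n) (Fin n) ℂ)
    (hδ : ∀ X Y : Matrix (Fin n) (Fin n) ℂ, δ (X * Y) = δ X * Y + X * δ Y) :
    ∃ A : Matrix (Fin n) (Fin n) ℂ, ∀ X, δ X = A * X - X * A := by
  rcases n with _ | n
  · exact ⟨0, fun X => Subsingleton.elim _ _⟩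
  · exact (isSeparabilityIdempotent_sum_single (K := ℂ) (0 : Fin (n + 1))).exists_eq_mul_sub_mul
      δ hδ
end

section
/- Let L be a finite-dimensional Lie algebra over a field of characteristic 0 whose Killing form λ(x, y) = tr(ad(x) ∘ ad(y)) is nondegenerate (i.e., L is semisimple). Then every derivation of L is inner: if D : L → L is linear and satisfies D([x, y]) = [D(x), y] + [x, D(y)] for all x, y ∈ L, then there exists d ∈ L with D = ad(d). -/
/-!
The inner derivations `ad L` form an ideal of `Der L`. Its Killing-orthogonal `I` in `Der L` is an
ideal as well, and for `D ∈ I` we get `ad (D x) = [D, ad x] ∈ I ∩ ad L`, on which the Killing form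
vanishes; nondegeneracy on `ad L ≅ L` then forces `ad (D x) = 0`, i.e. `D x = 0`, so `I = 0` and `ad L = Der L`
(`LieDerivation.IsKilling.exists_eq_ad`).
-/
lemma LieAlgebra.IsKilling.of_killingForm_nondegenerate {R L : Type*} [CommRing R] [LieRing L]
    [LieAlgebra R L] (h : (killingForm R L).Nondegenerate) : LieAlgebra.IsKilling R L where
  killingCompl_top_eq_bot := LieSubmodule.toSubmodule_injective <|
    (LieIdeal.coe_killingCompl_top R L).trans (LinearMap.separatingLeft_iff_ker_eq_bot.mp h.1)

namespace LieDerivation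

variable {R L : Type*} [CommRing R] [LieRing L] [LieAlgebra R L]

def ofLeibniz (D : L →ₗ[R] L) (hD : ∀ x y, D ⁅x, y⁆ = ⁅D x, y⁆ + ⁅x, D y⁆) :
    LieDerivation R L L where
  __ := D
  leibniz' x y := by rw [hD, ← lie_skew y (D x)]; abel

@[simp] lemma coe_ofLeibniz (D : L →ₗ[R] L) (hD : ∀ x y, D ⁅x, y⁆ = ⁅D x, y⁆ + ⁅x, D y⁆) :
    ⇑(ofLeibniz D hD) = D := rfl

end LieDerivation

theorem lie_derivation_inner_general (K L : Type*) [Field K] [LieRing L]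
    [LieAlgebra K L] [Module.Finite K L]
    (hK : (killingForm K L).Nondegenerate)
    (D : L →ₗ[K] L)
    (hD : ∀ x y : L, D ⁅x, y⁆ = ⁅D x, y⁆ + ⁅x, D y⁆) :
    ∃ d : L, ∀ x : L, D x = ⁅d, x⁆ := by
  have := LieAlgebra.IsKilling.of_killingForm_nondegenerate hK
  obtain ⟨d, hd⟩ := LieDerivation.IsKilling.exists_eq_ad (LieDerivation.ofLeibniz D hD)
  refine ⟨d, fun x => ?_⟩
  simpa using (DFunLike.congr_fun hd x).symm

/-- Every derivation of a finite-dimensional Lie algebra over a field of characteristic 0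
with nondegenerate Killing form (i.e. a semisimple Lie algebra) is inner. -/
theorem lie_derivation_inner (K L : Type*) [Field K] [CharZero K] [LieRing L]
    [LieAlgebra K L] [Module.Finite K L]
    (hK : (killingForm K L).Nondegenerate)
    (D : L →ₗ[K] L)
    (hD : ∀ x y : L, D ⁅x, y⁆ = ⁅D x, y⁆ + ⁅x, D y⁆) :
    ∃ d : L, ∀ x : L, D x = ⁅d, x⁆ :=
  lie_derivation_inner_general K L hK D hD
end

section
/- (Sinclair) Let A be a semisimple complex Banach algebra and let D : A → A be a continuous linear map satisfying D(a²) = aD(a) + D(a)a for all a ∈ A (a continuous Jordan derivation). Then D is an associative derivation: D(ab) = D(a)b + aD(b) for all a, b ∈ A. -/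
/-!
Herstein's argument. Write `δ(a, b) = D(ab) - D(a)b - aD(b)` and `[a, b] = ab - ba`. Expanding
`D((ab)x(ba))` in two ways with the Jordan triple identity `D(axa) = D(a)xa + aD(x)a + axD(a)`
gives `δ(a,b) x [a,b] + [a,b] x δ(a,b) = 0` for all `x`. In a 2-torsion-free semiprime ring this
forces `δ(a,b) x [a,b] = 0`, and after linearizing in `a` and `b`, `δ(a,b) x [c,d] = 0`. Hence each
`u = δ(a,b)` is central and kills all commutators, so `ua` is central too. A Jordan derivation
satisfies `δ(c, x) = 0` for every central `c`, and `u² = δ(ua,b) - δ(u,ab) + δ(u,a)b` then gives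
`u² = 0`, whence `u = 0`. A semisimple ring is semiprime: if `uRu = 0` then `yu` squares to zero
for every `y`, so `u` lies in the Jacobson radical.
-/

def IsSemiprimeRing (R : Type*) [Ring R] : Prop :=
  ∀ u : R, (∀ x, u * x * u = 0) → u = 0

section Semiprime

variable {R : Type*} [Ring R]

theorem isSemiprimeRing_of_jacobson_bot_eq_bot (h : (⊥ : Ideal R).jacobson = ⊥) :
    IsSemiprimeRing R := by
  intro u hu
  have hmem : u ∈ (⊥ : Ideal R).jacobson := Ideal.mem_jacobson_iff.2 fun y =>
    ⟨1 - y * u, by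
      rw [Ideal.mem_bot]
      linear_combination (norm := noncomm_ring) -(y * hu y)⟩
  simpa [h] using hmem

namespace IsSemiprimeRing

variable (hR : IsSemiprimeRing R) {u v : R}
include hR

theorem mul_mul_eq_zero_symm (h : ∀ x, u * x * v = 0) (x : R) : v * x * u = 0 :=
  hR _ fun y => by linear_combination (norm := noncomm_ring) (v * x) * h y * (x * u)

theorem eq_zero_of_mul_self_eq_zero (hu : ∀ x, u * x = x * u) (h : u * u = 0) : u = 0 :=
  hR u fun x => by linear_combination (norm := noncomm_ring) hu x * u + x * h

theorem mul_mul_eq_zero_of_linearized {u' v' : R} (h : ∀ x, u * x * v = 0)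
    (h' : ∀ x, u * x * v' + u' * x * v = 0) (x : R) : u * x * v' = 0 :=
  hR _ fun y => by
    linear_combination (norm := noncomm_ring)
      h' x * (y * u * x * v') - (u' * x) * hR.mul_mul_eq_zero_symm h y * (x * v')

/-- Brešar's lemma. -/
theorem mul_mul_eq_zero_of_add_swap [IsAddTorsionFree R] (h : ∀ x, u * x * v + v * x * u = 0)
    (x : R) : u * x * v = 0 := by
  refine hR _ fun t => ?_
  have h₁ : (u * x * u) * t * (v * x * v) = (u * x * v) * t * (u * x * v) := by
    linear_combination (norm := noncomm_ring)
      h (x * u * t) * (x * v) - h x * (t * (u * (x * v)))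
  have h₂ : (u * x * v) * t * (u * x * v) = -((u * x * u) * t * (v * x * v)) := by
    linear_combination (norm := noncomm_ring) (u * x) * h t * (x * v)
  refine two_nsmul_eq_zero.1 ?_
  rw [two_nsmul]
  linear_combination (norm := noncomm_ring) h₂ - h₁

theorem mul_comm_of_commutator_mul_mul_eq_zero {w : R} (h : ∀ x, (u * w - w * u) * x * u = 0) :
    u * w = w * u := by
  rw [← sub_eq_zero]
  exact hR _ fun y => by linear_combination (norm := noncomm_ring) h y * w - h (y * w)

theorem mul_comm_of_commutators_central (h : ∀ x w, (x * v - v * x) * w = w * (x * v - v * x))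
    (x : R) : x * v = v * x := by
  rw [← sub_eq_zero]
  refine hR.eq_zero_of_mul_self_eq_zero (h x) ?_
  -- `[yx, v] = y[x, v]` commutes with `x`, and so does `[x, v]`
  linear_combination (norm := noncomm_ring) v * h x x - h (v * x) x

end IsSemiprimeRing

end Semiprime

section Jordan

variable {R : Type*} [Ring R]

def IsJordanDerivation (D : R →+ R) : Prop :=
  ∀ a, D (a * a) = a * D a + D a * a

def derivationDefect (D : R →+ R) (a b : R) : R :=
  D (a * b) - D a * b - a * D b

variable {D : R →+ R}

theorem derivationDefect_add_left (a c b : R) :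
    derivationDefect D (a + c) b = derivationDefect D a b + derivationDefect D c b := by
  simp only [derivationDefect, add_mul, map_add]
  abel

theorem derivationDefect_add_right (a b d : R) :
    derivationDefect D a (b + d) = derivationDefect D a b + derivationDefect D a d := by
  simp only [derivationDefect, mul_add, map_add]
  abel

theorem derivationDefect_mul_left (u a b : R) :
    derivationDefect D (u * a) b =
      derivationDefect D u (a * b) - derivationDefect D u a * b + u * derivationDefect D a b := by
  simp only [derivationDefect, mul_assoc]
  noncomm_ring

namespace IsJordanDerivation

variable (hD : IsJordanDerivation D)
include hD

theorem map_mul_add_mul_swap (a b : R) :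
    D (a * b) + D (b * a) = a * D b + D b * a + D a * b + b * D a := by
  have h := hD (a + b)
  rw [show (a + b) * (a + b) = a * a + (a * b + b * a) + b * b by noncomm_ring] at h
  simp only [map_add, hD a, hD b] at h
  linear_combination (norm := noncomm_ring) h

variable [IsAddTorsionFree R]

theorem map_triple (a b : R) : D (a * b * a) = D a * b * a + a * D b * a + a * b * D a := by
  have h₁ := hD.map_mul_add_mul_swap a (a * b + b * a)
  rw [show a * (a * b + b * a) = a * a * b + a * b * a by noncomm_ring,
    show (a * b + b * a) * a = a * b * a + b * (a * a) by noncomm_ring] at h₁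
  simp only [map_add] at h₁
  have h₂ := hD.map_mul_add_mul_swap (a * a) b
  rw [hD a] at h₂
  have h₃ := hD.map_mul_add_mul_swap a b
  rw [← sub_eq_zero, ← two_nsmul_eq_zero, two_nsmul]
  linear_combination (norm := noncomm_ring) h₁ - h₂ + a * h₃ + h₃ * a

theorem map_triple_add_triple_swap (a x c : R) :
    D (a * x * c) + D (c * x * a) = D a * x * c + a * D x * c + a * x * D c
      + D c * x * a + c * D x * a + c * x * D a := by
  have h := hD.map_triple (a + c) x
  rw [show (a + c) * x * (a + c) = a * x * a + (a * x * c + c * x * a) + c * x * c by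
    noncomm_ring] at h
  simp only [map_add] at h
  linear_combination (norm := noncomm_ring) h - hD.map_triple a x - hD.map_triple c x

theorem derivationDefect_mul_mul_commutator_add_swap (a b x : R) :
    derivationDefect D a b * x * (a * b - b * a) + (a * b - b * a) * x * derivationDefect D a b
      = 0 := by
  -- both sides of `(ab)x(ba) = a(bxb)a` and `(ba)x(ab) = b(axa)b` expanded by the triple identity
  have h₁ := hD.map_triple_add_triple_swap (a * b) x (b * a)
  rw [show a * b * x * (b * a) = a * (b * x * b) * a by noncomm_ring,
    show b * a * x * (a * b) = b * (a * x * a) * b by noncomm_ring] at h₁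
  have h₂ := hD.map_triple a (b * x * b)
  rw [hD.map_triple b x] at h₂
  have h₃ := hD.map_triple b (a * x * a)
  rw [hD.map_triple a x] at h₃
  have h₄ := hD.map_mul_add_mul_swap a b
  simp only [derivationDefect]
  linear_combination (norm := noncomm_ring) h₁ - h₂ - h₃ + (a * b * x) * h₄ + h₄ * (x * a * b)

section Semiprime

variable (hR : IsSemiprimeRing R)
include hR

theorem derivationDefect_mul_mul_commutator_self (a b x : R) :
    derivationDefect D a b * x * (a * b - b * a) = 0 :=
  hR.mul_mul_eq_zero_of_add_swap (hD.derivationDefect_mul_mul_commutator_add_swap a b) x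

theorem derivationDefect_mul_mul_commutator_left (a b c x : R) :
    derivationDefect D a b * x * (c * b - b * c) = 0 := by
  refine hR.mul_mul_eq_zero_of_linearized (u' := derivationDefect D c b)
    (hD.derivationDefect_mul_mul_commutator_self hR a b) (fun y => ?_) x
  have h := hD.derivationDefect_mul_mul_commutator_self hR (a + c) b y
  rw [derivationDefect_add_left] at h
  linear_combination (norm := noncomm_ring) h
    - hD.derivationDefect_mul_mul_commutator_self hR a b y
    - hD.derivationDefect_mul_mul_commutator_self hR c b y

theorem derivationDefect_mul_mul_commutator (a b c d x : R) :
    derivationDefect D a b * x * (c * d - d * c) = 0 := by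
  refine hR.mul_mul_eq_zero_of_linearized (u' := derivationDefect D a d)
    (hD.derivationDefect_mul_mul_commutator_left hR a b c) (fun y => ?_) x
  have h := hD.derivationDefect_mul_mul_commutator_left hR a (b + d) c y
  rw [derivationDefect_add_right] at h
  linear_combination (norm := noncomm_ring) h
    - hD.derivationDefect_mul_mul_commutator_left hR a b c y
    - hD.derivationDefect_mul_mul_commutator_left hR a d c y

theorem derivationDefect_mul_commutator (a b c d : R) :
    derivationDefect D a b * (c * d - d * c) = 0 := by
  simpa using hD.derivationDefect_mul_mul_commutator hR a b c d 1

theorem derivationDefect_mul_comm (a b w : R) :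
    derivationDefect D a b * w = w * derivationDefect D a b :=
  hR.mul_comm_of_commutator_mul_mul_eq_zero
    (hR.mul_mul_eq_zero_symm (hD.derivationDefect_mul_mul_commutator hR a b _ w))

theorem derivationDefect_eq_zero_of_central {c : R} (hc : ∀ w, c * w = w * c) (x : R) :
    derivationDefect D c x = 0 := by
  have h₂ : ∀ x, 2 • derivationDefect D c x = x * D c - D c * x := fun x => by
    have h := hD.map_mul_add_mul_swap c x
    rw [← hc x] at h
    rw [derivationDefect, two_nsmul]
    linear_combination (norm := noncomm_ring) h - hc (D x)
  have hDc : ∀ y, y * D c = D c * y := hR.mul_comm_of_commutators_central fun y w => by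
    rw [← h₂, smul_mul_assoc, mul_smul_comm, hD.derivationDefect_mul_comm hR]
  rw [← two_nsmul_eq_zero, h₂, hDc, sub_self]

/-- Herstein's theorem. -/
theorem map_mul (a b : R) : D (a * b) = D a * b + a * D b := by
  have hu := hD.derivationDefect_mul_comm hR a b
  have hua : ∀ w, derivationDefect D a b * a * w = w * (derivationDefect D a b * a) := fun w => by
    linear_combination (norm := noncomm_ring)
      hD.derivationDefect_mul_commutator hR a b a w + hu w * a
  have hsq : derivationDefect D a b * derivationDefect D a b = 0 := by
    linear_combination (norm := noncomm_ring) -derivationDefect_mul_left (D := D) _ a b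
      + hD.derivationDefect_eq_zero_of_central hR hua b
      - hD.derivationDefect_eq_zero_of_central hR hu (a * b)
      + hD.derivationDefect_eq_zero_of_central hR hu a * b
  have hu0 := hR.eq_zero_of_mul_self_eq_zero hu hsq
  rwa [derivationDefect, sub_sub, sub_eq_zero] at hu0

end Semiprime

end IsJordanDerivation

end Jordan

theorem sinclair_jordan_derivation_general (A : Type*) [NormedRing A] [NormedAlgebra ℂ A]
    (hss : (⊥ : Ideal A).jacobson = ⊥)
    (D : A →L[ℂ] A)
    (hD : ∀ a : A, D (a * a) = a * D a + D a * a) :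
    ∀ a b : A, D (a * b) = D a * b + a * D b :=
  have : IsAddTorsionFree A := .of_isTorsionFree ℂ A
  IsJordanDerivation.map_mul (D := (D : A →+ A)) hD (isSemiprimeRing_of_jacobson_bot_eq_bot hss)

/-- (Sinclair) Every continuous Jordan derivation on a semisimple complex Banach algebra
is an associative derivation. -/
theorem sinclair_jordan_derivation (A : Type*) [NormedRing A] [NormedAlgebra ℂ A]
    [CompleteSpace A]
    (hss : (⊥ : Ideal A).jacobson = ⊥)
    (D : A →L[ℂ] A)
    (hD : ∀ a : A, D (a * a) = a * D a + D a * a) :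
    ∀ a b : A, D (a * b) = D a * b + a * D b :=
  sinclair_jordan_derivation_general A hss D hD
end

section
/- (Šilov) Every algebra homomorphism from a complex Banach algebra A into a commutative semisimple complex Banach algebra B is automatically continuous. -/
/-!
For every character `χ` of `B`, `χ ∘ φ` is a multiplicative functional on `A`; its value at `1` is
idempotent, so it is either zero or unital, and a unital one is bounded by the spectral radius.
Hence if `u n → x` and `φ (u n) → y`, every character takes the same value at `y` and at `φ x`.
By Gelfand–Mazur an element killed by all characters lies in the Jacobson radical, so
semisimplicity gives `y = φ x`, and the closed graph theorem concludes.
-/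

open WeakDual Filter

namespace NonUnitalAlgHom

variable {𝕜 A : Type*} [NormedField 𝕜] [NormedRing A] [NormedAlgebra 𝕜 A] [CompleteSpace A]

theorem continuous (f : A →ₙₐ[𝕜] 𝕜) : Continuous f := by
  have hidem : IsIdempotentElem (f 1) := by rw [IsIdempotentElem, ← map_mul, one_mul]
  rcases IsIdempotentElem.iff_eq_zero_or_one.mp hidem with h | h
  · have hf : ⇑f = 0 := funext fun x => by rw [← mul_one x, map_mul, h, mul_zero, Pi.zero_apply]
    exact hf ▸ continuous_zero
  · let g : A →ₐ[𝕜] 𝕜 :=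
      { f with
        map_one' := h
        commutes' := fun c => by simp [Algebra.algebraMap_eq_smul_one, h] }
    exact map_continuous g

end NonUnitalAlgHom

section Semisimple

variable {B : Type*} [NormedCommRing B] [NormedAlgebra ℂ B] [CompleteSpace B]

theorem mem_jacobson_bot_of_forall_characterSpace_eq_zero {b : B}
    (hb : ∀ χ : characterSpace ℂ B, χ b = 0) : b ∈ (⊥ : Ideal B).jacobson :=
  Ideal.mem_jacobson_bot.mpr fun y => by
    by_contra h
    obtain ⟨χ, hχ⟩ := CharacterSpace.exists_apply_eq_zero h
    simp [hb] at hχ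

theorem eq_of_forall_characterSpace_eq (hss : (⊥ : Ideal B).jacobson = ⊥) {a b : B}
    (h : ∀ χ : characterSpace ℂ B, χ a = χ b) : a = b := by
  have hab : a - b ∈ (⊥ : Ideal B).jacobson :=
    mem_jacobson_bot_of_forall_characterSpace_eq_zero fun χ => by rw [map_sub, h, sub_self]
  rwa [hss, Ideal.mem_bot, sub_eq_zero] at hab

end Semisimple

/-- (Šilov) Every algebra homomorphism from a complex Banach algebra into a commutative
semisimple complex Banach algebra is automatically continuous. -/
theorem silov_automatic_continuity (A B : Type*) [NormedRing A] [NormedAlgebra ℂ A]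
    [CompleteSpace A] [NormedCommRing B] [NormedAlgebra ℂ B] [CompleteSpace B]
    (hss : (⊥ : Ideal B).jacobson = ⊥)
    (φ : A →ₗ[ℂ] B)
    (hφ : ∀ x y : A, φ (x * y) = φ x * φ y) :
    Continuous φ := by
  let ψ : A →ₙₐ[ℂ] B := { φ with map_zero' := map_zero φ, map_mul' := hφ }
  refine φ.continuous_of_seq_closed_graph fun u x y hu hy => ?_
  refine eq_of_forall_characterSpace_eq hss fun χ =>
    tendsto_nhds_unique (f := χ ∘ φ ∘ u) (l := atTop) ?_ ?_
  · exact ((map_continuous χ).tendsto y).comp hy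
  · exact (((CharacterSpace.toNonUnitalAlgHom χ).comp ψ).continuous.tendsto x).comp hu
end

section
/- (Johnson) Every surjective algebra homomorphism from a complex Banach algebra A onto a semisimple complex Banach algebra B is automatically continuous. -/
/-!
Ransford's proof. By the closed graph theorem it suffices that the separating space
`{b | ∃ uₙ → 0, φ uₙ → b}` vanishes; it is a left ideal, so by semisimplicity it is enough that
each of its elements `b` has spectral radius zero. Write `b = φ c` and take `a` small with `φ a`
close to `b`. The affine function `f z = (b - φ a) + z • φ a = φ (c - a + z • a)` is small on a
small circle, while on a large circle `ρ (f z) ≤ ρ (c - a + z • a)` is controlled by norms in `A`,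
whatever the size of `φ`. Compactness of the circle and Gelfand's formula turn this into a uniform
bound on `‖f z ^ m‖`, and the maximum modulus principle for `z ^ (-m / 2) • f z ^ m` on the annulus
bounds `‖b ^ m‖ = ‖f 1 ^ m‖`, giving `ρ b ≤ η` for every `η > 0`.
-/

open scoped ENNReal NNReal Topology
open Filter Metric Set

lemma coe_nnnorm_rpow_one_div_lt_ofReal_iff {E : Type*} [SeminormedAddGroup E] (y : E) {n : ℕ}
    (hn : n ≠ 0) {D : ℝ} (hD : 0 ≤ D) :
    (‖y‖₊ : ℝ≥0∞) ^ (1 / n : ℝ) < ENNReal.ofReal D ↔ ‖y‖ < D ^ n := by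
  rw [one_div, ENNReal.rpow_inv_lt_iff (by positivity), ENNReal.rpow_natCast,
    ← ENNReal.ofReal_pow hD, ← enorm_eq_nnnorm, ← ofReal_norm,
    ENNReal.ofReal_lt_ofReal_iff_of_nonneg (norm_nonneg _)]

lemma coe_nnnorm_rpow_one_div_le_ofReal_iff {E : Type*} [SeminormedAddGroup E] (y : E) {n : ℕ}
    (hn : n ≠ 0) {D : ℝ} (hD : 0 ≤ D) :
    (‖y‖₊ : ℝ≥0∞) ^ (1 / n : ℝ) ≤ ENNReal.ofReal D ↔ ‖y‖ ≤ D ^ n := by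
  rw [one_div, ENNReal.rpow_inv_le_iff (by positivity), ENNReal.rpow_natCast,
    ← ENNReal.ofReal_pow hD, ← enorm_eq_nnnorm, ← ofReal_norm,
    ENNReal.ofReal_le_ofReal_iff (by positivity)]

lemma norm_apply_one_le_of_norm_le_on_circles {E : Type*} [NormedAddCommGroup E]
    [NormedSpace ℂ E] {g : ℂ → E} (hg : Differentiable ℂ g) {r R : ℝ} (hr : 0 < r) (hr1 : r < 1)
    (hR : 1 < R) (q : ℕ) {Mr MR : ℝ} (hMr : ∀ z : ℂ, ‖z‖ = r → ‖g z‖ ≤ Mr)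
    (hMR : ∀ z : ℂ, ‖z‖ = R → ‖g z‖ ≤ MR) :
    ‖g 1‖ ≤ max (Mr / r ^ q) (MR / R ^ q) := by
  set U : Set ℂ := norm ⁻¹' Ioo r R
  have h_ne_zero : ∀ z ∈ closure U, z ≠ 0 := fun z hz hz0 => by
    have := continuous_norm.closure_preimage_subset _ hz
    rw [closure_Ioo (hr1.trans hR).ne, hz0, mem_preimage, norm_zero] at this
    exact hr.not_ge this.1
  have hdiff : DiffContOnCl ℂ (fun z => (z ^ q)⁻¹ • g z) U := DifferentiableOn.diffContOnCl
    fun z hz => ((differentiableAt_inv (pow_ne_zero q (h_ne_zero z hz))).comp z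
      (differentiableAt_pow q)).smul (hg z) |>.differentiableWithinAt
  have hbdd : Bornology.IsBounded U :=
    isBounded_closedBall.subset fun z hz => mem_closedBall_zero_iff.2 (le_of_lt hz.2)
  have h1U : (1 : ℂ) ∈ closure U := subset_closure (by simp [U, hr1, hR])
  refine (Complex.norm_le_of_forall_mem_frontier_norm_le hbdd hdiff (fun z hz => ?_) h1U).trans_eq'
    (by simp)
  have hz' := continuous_norm.frontier_preimage_subset _ hz
  rw [frontier_Ioo (hr1.trans hR), mem_preimage, mem_insert_iff, mem_singleton_iff] at hz'
  rw [norm_smul, norm_inv, norm_pow, ← div_eq_inv_mul]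
  rcases hz' with hz' | hz'
  · exact le_max_of_le_left (by rw [hz']; gcongr; exact hMr z hz')
  · exact le_max_of_le_right (by rw [hz']; gcongr; exact hMR z hz')

section Gelfand

variable {B : Type*} [NormedRing B] [NormedAlgebra ℂ B] [CompleteSpace B]

lemma eventually_norm_pow_lt_of_spectralRadius_lt {x : B} {D : ℝ}
    (h : spectralRadius ℂ x < ENNReal.ofReal D) : ∀ᶠ n in atTop, ‖x ^ n‖ < D ^ n := by
  have hD : 0 < D := ENNReal.ofReal_pos.1 (zero_le.trans_lt h)
  have hgelfand := spectrum.pow_nnnorm_pow_one_div_tendsto_nhds_spectralRadius x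
  filter_upwards [hgelfand.eventually_lt_const h, eventually_ne_atTop 0] with n hn hn0
  exact (coe_nnnorm_rpow_one_div_lt_ofReal_iff _ hn0 hD.le).1 hn

lemma spectralRadius_le_of_eventually_norm_pow_le {x : B} {η : ℝ} (hη : 0 ≤ η) {n : ℕ → ℕ}
    (hn : Tendsto n atTop atTop) (h : ∀ᶠ k in atTop, ‖x ^ n k‖ ≤ η ^ n k) :
    spectralRadius ℂ x ≤ ENNReal.ofReal η := by
  refine le_of_tendsto ((spectrum.pow_nnnorm_pow_one_div_tendsto_nhds_spectralRadius x).comp hn) ?_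
  filter_upwards [h, hn.eventually_ne_atTop 0] with k hk hk0
  exact (coe_nnnorm_rpow_one_div_le_ofReal_iff _ hk0 hη).2 hk

lemma IsCompact.eventually_forall_norm_pow_two_pow_lt {S : Set B} (hS : IsCompact S) {D : ℝ}
    (hD : ∀ x ∈ S, spectralRadius ℂ x < ENNReal.ofReal D) :
    ∀ᶠ k in atTop, ∀ x ∈ S, ‖x ^ 2 ^ k‖ < D ^ 2 ^ k := by
  set U : ℕ → Set B := fun k => {x | ‖x ^ 2 ^ k‖ < D ^ 2 ^ k}
  have hU_open (k : ℕ) : IsOpen (U k) := isOpen_lt (by fun_prop) continuous_const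
  have hU_mono : Monotone U := monotone_nat_of_le_succ fun k x (hx : ‖x ^ 2 ^ k‖ < D ^ 2 ^ k) =>
    calc ‖x ^ 2 ^ (k + 1)‖ = ‖(x ^ 2 ^ k) ^ 2‖ := by rw [pow_succ, pow_mul]
      _ ≤ ‖x ^ 2 ^ k‖ ^ 2 := norm_pow_le' _ two_pos
      _ < (D ^ 2 ^ k) ^ 2 := pow_lt_pow_left₀ hx (norm_nonneg _) two_ne_zero
      _ = D ^ 2 ^ (k + 1) := by rw [pow_succ, pow_mul]
  have hcover : S ⊆ ⋃ k, U k := fun x hx => mem_iUnion.2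
    ((tendsto_pow_atTop_atTop_of_one_lt one_lt_two).eventually
      (eventually_norm_pow_lt_of_spectralRadius_lt (hD x hx))).exists
  obtain ⟨K, hK⟩ := hS.elim_directed_cover U hU_open hcover hU_mono.directed_le
  exact eventually_atTop.2 ⟨K, fun k hk x hx => hU_mono hk (hK hx)⟩

lemma spectralRadius_add_le_of_circle_bounds {x y : B} {r R s D : ℝ} (hr : 0 < r) (hr1 : r < 1)
    (hR : 1 < R) (hs : ∀ z : ℂ, ‖z‖ = r ^ 2 → ‖x + z • y‖ ≤ s)
    (hD : ∀ z : ℂ, ‖z‖ = R ^ 2 → spectralRadius ℂ (x + z • y) < ENNReal.ofReal D) :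
    spectralRadius ℂ (x + y) ≤ ENNReal.ofReal (max (s / r) (D / R)) := by
  set f : ℂ → B := fun z => x + z • y
  have hs0 : 0 ≤ s := (norm_nonneg _).trans (hs ((r ^ 2 : ℝ) : ℂ) (by simp))
  have hD0 : 0 < D := ENNReal.ofReal_pos.1 (zero_le.trans_lt (hD ((R ^ 2 : ℝ) : ℂ) (by simp)))
  have hunif : ∀ᶠ k in atTop, ∀ w ∈ f '' sphere 0 (R ^ 2), ‖w ^ 2 ^ k‖ < D ^ 2 ^ k :=
    ((isCompact_sphere 0 _).image (by fun_prop)).eventually_forall_norm_pow_two_pow_lt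
      (forall_mem_image.2 fun z hz => hD z (mem_sphere_zero_iff_norm.1 hz))
  refine spectralRadius_le_of_eventually_norm_pow_le (by positivity)
    (tendsto_pow_atTop_atTop_of_one_lt one_lt_two |>.comp (tendsto_add_atTop_nat 1)) ?_
  filter_upwards [(tendsto_add_atTop_nat 1).eventually hunif] with k hk
  have hr_circle (z : ℂ) (hz : ‖z‖ = r ^ 2) : ‖f z ^ 2 ^ (k + 1)‖ ≤ s ^ 2 ^ (k + 1) :=
    (norm_pow_le' _ (by positivity)).trans (pow_le_pow_left₀ (norm_nonneg _) (hs z hz) _)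
  have hR_circle (z : ℂ) (hz : ‖z‖ = R ^ 2) : ‖f z ^ 2 ^ (k + 1)‖ ≤ D ^ 2 ^ (k + 1) :=
    (hk (f z) (mem_image_of_mem f (mem_sphere_zero_iff_norm.2 hz))).le
  calc ‖(x + y) ^ 2 ^ (k + 1)‖ = ‖f 1 ^ 2 ^ (k + 1)‖ := by simp [f]
    _ ≤ max (s ^ 2 ^ (k + 1) / (r ^ 2) ^ 2 ^ k) (D ^ 2 ^ (k + 1) / (R ^ 2) ^ 2 ^ k) :=
      norm_apply_one_le_of_norm_le_on_circles (by fun_prop) (by positivity)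
        (by nlinarith) (by nlinarith) _ hr_circle hR_circle
    _ = max ((s / r) ^ 2 ^ (k + 1)) ((D / R) ^ 2 ^ (k + 1)) := by
      rw [div_pow, div_pow, ← pow_mul, ← pow_mul, ← pow_succ']
    _ ≤ max (s / r) (D / R) ^ 2 ^ (k + 1) :=
      max_le (pow_le_pow_left₀ (by positivity) (le_max_left _ _) _)
        (pow_le_pow_left₀ (by positivity) (le_max_right _ _) _)

end Gelfand

section SeparatingSpace

variable {A B : Type*} [NormedRing A] [NormedRing B]

def separatingSpace (φ : A → B) : Set B :=
  {b | ∃ u : ℕ → A, Tendsto u atTop (𝓝 0) ∧ Tendsto (φ ∘ u) atTop (𝓝 b)}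

lemma sub_mem_separatingSpace {F : Type*} [FunLike F A B] [AddMonoidHomClass F A B] (φ : F)
    {u : ℕ → A} {x : A} {y : B} (hux : Tendsto u atTop (𝓝 x))
    (huy : Tendsto (φ ∘ u) atTop (𝓝 y)) : y - φ x ∈ separatingSpace φ :=
  ⟨fun n => u n - x, by simpa using hux.sub_const x,
    by simpa [Function.comp_def] using huy.sub_const (φ x)⟩

lemma mul_mem_separatingSpace {F : Type*} [FunLike F A B] [MulHomClass F A B] (φ : F) {b : B}
    (hb : b ∈ separatingSpace φ) (v : A) : φ v * b ∈ separatingSpace φ := by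
  obtain ⟨u, hu0, huφ⟩ := hb
  exact ⟨fun n => v * u n, by simpa using hu0.const_mul v,
    by simpa [Function.comp_def] using huφ.const_mul (φ v)⟩

end SeparatingSpace

lemma norm_sub_add_smul_le {𝕜 E : Type*} [NormedField 𝕜] [SeminormedAddCommGroup E]
    [NormedSpace 𝕜 E] {x y : E} {z : 𝕜} {r η : ℝ} (hr : 0 ≤ r) (hz : ‖z‖ = r ^ 2)
    (hxy : ‖x - y‖ ≤ r * η / 2) (hy : r * ‖y‖ ≤ η / 2) : ‖(x - y) + z • y‖ ≤ r * η :=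
  calc ‖(x - y) + z • y‖ ≤ ‖x - y‖ + r * (r * ‖y‖) := by
        rw [← mul_assoc, ← sq, ← hz, ← norm_smul]; exact norm_add_le _ _
    _ ≤ r * η / 2 + r * (η / 2) := by gcongr
    _ = r * η := by ring

lemma spectralRadius_apply_le {𝕜 A B : Type*} [NontriviallyNormedField 𝕜] [NormedRing A]
    [NormedAlgebra 𝕜 A] [CompleteSpace A] [Ring B] [Algebra 𝕜 B] (φ : A →ₐ[𝕜] B) (w : A) :
    spectralRadius 𝕜 (φ w) ≤ ENNReal.ofReal (‖w‖ * ‖(1 : A)‖) :=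
  iSup₂_le fun _ hk => by
    rw [← enorm_eq_nnnorm, ← ofReal_norm]
    exact ENNReal.ofReal_le_ofReal
      (spectrum.norm_le_norm_mul_of_mem (AlgHom.spectrum_apply_subset φ w hk))

lemma spectralRadius_sub_add_smul_apply_lt {𝕜 A B : Type*} [NontriviallyNormedField 𝕜]
    [NormedRing A] [NormedAlgebra 𝕜 A] [CompleteSpace A] [Ring B] [Algebra 𝕜 B] (φ : A →ₐ[𝕜] B)
    (c : A) {a : A} {z : 𝕜} {R : ℝ} (hz : ‖z‖ = R) (ha : ‖a‖ * ((1 + R) * ‖(1 : A)‖) < 1) :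
    spectralRadius 𝕜 ((φ c - φ a) + z • φ a) < ENNReal.ofReal (‖c‖ * ‖(1 : A)‖ + 1) := by
  have hw : ‖c - a + z • a‖ ≤ ‖c‖ + (1 + R) * ‖a‖ :=
    calc ‖c - a + z • a‖ ≤ ‖c‖ + ‖a‖ + R * ‖a‖ := by
          rw [← hz, ← norm_smul]; exact (norm_add_le _ _).trans (by gcongr; exact norm_sub_le _ _)
      _ = ‖c‖ + (1 + R) * ‖a‖ := by ring
  rw [← map_sub, ← map_smul, ← map_add]
  refine (spectralRadius_apply_le φ _).trans_lt
    ((ENNReal.ofReal_lt_ofReal_iff (by positivity)).2 ?_)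
  nlinarith [norm_nonneg (1 : A)]

section Johnson

variable {A B : Type*} [NormedRing A] [NormedAlgebra ℂ A] [CompleteSpace A]
  [NormedRing B] [NormedAlgebra ℂ B] [CompleteSpace B]

lemma spectralRadius_le_of_mem_separatingSpace (φ : A →ₐ[ℂ] B)
    (hφ : Function.Surjective φ) {b : B} (hb : b ∈ separatingSpace φ) {η : ℝ} (hη : 0 < η) :
    spectralRadius ℂ b ≤ ENNReal.ofReal η := by
  obtain ⟨c, rfl⟩ := hφ b
  obtain ⟨u, hu0, huφ⟩ := hb
  set D := ‖c‖ * ‖(1 : A)‖ + 1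
  set R := max 2 (D / η)
  set r := min (1 / 2) (η / (2 * (‖φ c‖ + 1)))
  have hR : 1 < R := lt_max_of_lt_left one_lt_two
  have hDR : D / R ≤ η := by
    have := (div_le_iff₀ hη).1 (le_max_right 2 (D / η))
    rw [div_le_iff₀ (by positivity)]
    linarith
  have hr : 0 < r := by positivity
  have hr1 : r < 1 := (min_le_left _ _).trans_lt one_half_lt_one
  have hr_le : r * (‖φ c‖ + 1) ≤ η / 2 := by
    have := min_le_right (1 / 2) (η / (2 * (‖φ c‖ + 1)))
    rw [le_div_iff₀ (by positivity)] at this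
    linarith
  have hu_small : Tendsto (fun n => ‖u n‖ * ((1 + R ^ 2) * ‖(1 : A)‖)) atTop (𝓝 0) := by
    simpa using (tendsto_norm_zero.comp hu0).mul_const ((1 + R ^ 2) * ‖(1 : A)‖)
  have hu_close : Tendsto (fun n => ‖φ c - φ (u n)‖) atTop (𝓝 0) := by
    simpa [norm_sub_rev] using tendsto_iff_norm_sub_tendsto_zero.1 huφ
  obtain ⟨n, hn_small, hn_close, hn_near⟩ : ∃ n, ‖u n‖ * ((1 + R ^ 2) * ‖(1 : A)‖) < 1 ∧
      ‖φ c - φ (u n)‖ ≤ r * η / 2 ∧ ‖φ c - φ (u n)‖ ≤ 1 :=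
    ((hu_small.eventually (gt_mem_nhds one_pos)).and ((hu_close.eventually
      (ge_mem_nhds (by positivity))).and (hu_close.eventually (ge_mem_nhds one_pos)))).exists
  set a := u n
  have ha : r * ‖φ a‖ ≤ η / 2 := by
    have : ‖φ a‖ ≤ ‖φ c‖ + 1 := by
      linarith [norm_le_norm_add_norm_sub' (φ a) (φ c), norm_sub_rev (φ a) (φ c)]
    nlinarith
  have hs (z : ℂ) (hz : ‖z‖ = r ^ 2) : ‖(φ c - φ a) + z • φ a‖ ≤ r * η :=
    norm_sub_add_smul_le hr.le hz hn_close ha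
  have hD (z : ℂ) (hz : ‖z‖ = R ^ 2) :
      spectralRadius ℂ ((φ c - φ a) + z • φ a) < ENNReal.ofReal D :=
    spectralRadius_sub_add_smul_apply_lt φ c hz hn_small
  calc spectralRadius ℂ (φ c) = spectralRadius ℂ ((φ c - φ a) + φ a) := by rw [sub_add_cancel]
    _ ≤ ENNReal.ofReal (max (r * η / r) (D / R)) :=
      spectralRadius_add_le_of_circle_bounds hr hr1 hR hs hD
    _ ≤ ENNReal.ofReal η := by
      rw [mul_div_cancel_left₀ _ hr.ne']
      exact ENNReal.ofReal_le_ofReal (max_le le_rfl hDR)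

lemma spectralRadius_eq_zero_of_mem_separatingSpace (φ : A →ₐ[ℂ] B)
    (hφ : Function.Surjective φ) {b : B} (hb : b ∈ separatingSpace φ) :
    spectralRadius ℂ b = 0 :=
  nonpos_iff_eq_zero.1 <| ENNReal.le_of_forall_pos_le_add fun ε hε _ => by
    simpa using spectralRadius_le_of_mem_separatingSpace φ hφ hb (η := ε) (by exact_mod_cast hε)

end Johnson

lemma mem_jacobson_bot_of_forall_spectralRadius_mul_eq_zero {𝕜 B : Type*}
    [NontriviallyNormedField 𝕜] [NormedRing B] [NormedAlgebra 𝕜 B] {b : B}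
    (h : ∀ w, spectralRadius 𝕜 (w * b) = 0) :
    b ∈ (⊥ : Ideal B).jacobson := by
  refine Ideal.mem_jacobson_iff.2 fun w => ?_
  obtain ⟨u, hu⟩ : IsUnit (1 - (-1 : 𝕜) • (w * b)) :=
    spectrum.isUnit_one_sub_smul_of_lt_inv_radius (by simp [h w])
  refine ⟨↑u⁻¹, (Submodule.mem_bot _).2 ?_⟩
  have hu' : (u : B) = w * b + 1 := by rw [hu, neg_one_smul, sub_neg_eq_add, add_comm]
  rw [mul_assoc, ← mul_add_one, ← hu', u.inv_mul, sub_self]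

lemma map_one_of_surjective {M N : Type*} [MulOneClass M] [MulOneClass N] {f : M → N}
    (hf : ∀ x y, f (x * y) = f x * f y) (hsurj : Function.Surjective f) : f 1 = 1 := by
  obtain ⟨e, he⟩ := hsurj 1
  calc f 1 = f 1 * f e := by rw [he, mul_one]
    _ = 1 := by rw [← hf, one_mul, he]

/-- (Johnson) Every surjective algebra homomorphism from a complex Banach algebra onto a
semisimple complex Banach algebra is automatically continuous. -/
theorem johnson_automatic_continuity (A B : Type*) [NormedRing A] [NormedAlgebra ℂ A]
    [CompleteSpace A] [NormedRing B] [NormedAlgebra ℂ B] [CompleteSpace B]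
    (hss : (⊥ : Ideal B).jacobson = ⊥)
    (φ : A →ₗ[ℂ] B)
    (hφ : ∀ x y : A, φ (x * y) = φ x * φ y)
    (hsurj : Function.Surjective φ) :
    Continuous φ := by
  let ψ : A →ₐ[ℂ] B := AlgHom.ofLinearMap φ (map_one_of_surjective hφ hsurj) hφ
  refine φ.continuous_of_seq_closed_graph fun u x y hux huy => ?_
  have hsep : y - ψ x ∈ separatingSpace ψ := sub_mem_separatingSpace ψ hux huy
  have hrad : y - ψ x ∈ (⊥ : Ideal B).jacobson :=
    mem_jacobson_bot_of_forall_spectralRadius_mul_eq_zero fun w => by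
      obtain ⟨v, rfl⟩ := hsurj w
      exact spectralRadius_eq_zero_of_mem_separatingSpace ψ hsurj (mul_mem_separatingSpace ψ hsep v)
  rw [hss, Submodule.mem_bot, sub_eq_zero] at hrad
  exact hrad
end

section
/- Let δ : M_{m,n}(ℂ) → M_{m,n}(ℂ) be a ℂ-linear map which is a derivation with respect to triple matrix multiplication, i.e., δ(AB*C) = δ(A)B*C + Aδ(B)*C + AB*δ(C) for all A, B, C ∈ M_{m,n}(ℂ). Then δ is a finite sum of derivations of the form X ↦ AX + XB, where A ∈ M_m(ℂ) with A* = −A and B ∈ M_n(ℂ) with B* = −B. -/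
/-!
Since `E_{p j₀} E_{i₀ j₀}ᴴ E_{i₀ u} = E_{p u}` for matrix units, the derivation identity expresses
`δ E_{p u}` as `A E_{p u} + E_{p u} B`, with `A`, `B` read off from the values of `δ` on matrix
units; by linearity `δ X = A X + X B`. Substituting this back into the identity gives
`X ((B + Bᴴ) Yᴴ + Yᴴ (A + Aᴴ)) Z = 0` for all `X, Y, Z`, hence `(A + Aᴴ) Y + Y (B + Bᴴ) = 0`:
the Hermitian parts of `A` and `B` cancel, and `δ` is `X ↦ A' X + X B'` with `A'`, `B'` the
skew-Hermitian parts of `A` and `B`.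
-/

open scoped Matrix

namespace Matrix

theorem eq_zero_of_forall_mul_mul_eq_zero {α m n : Type*} [Semiring α] [Fintype m] [Fintype n]
    [DecidableEq m] [DecidableEq n] [Nonempty m] [Nonempty n] {M : Matrix n m α}
    (h : ∀ X Z : Matrix m n α, X * M * Z = 0) : M = 0 := by
  obtain ⟨i₀⟩ := ‹Nonempty m›
  obtain ⟨j₀⟩ := ‹Nonempty n›
  ext a b
  simpa using congr_fun₂ (h (single i₀ a 1) (single b j₀ 1)) i₀ j₀

variable {R : Type*} [CommRing R] [StarRing R] {m n : Type*} [Fintype m] [Fintype n]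

def IsTripleDerivation (δ : Matrix m n R →ₗ[R] Matrix m n R) : Prop :=
  ∀ A B C : Matrix m n R, δ (A * Bᴴ * C) = δ A * Bᴴ * C + A * (δ B)ᴴ * C + A * Bᴴ * δ C

namespace IsTripleDerivation

variable {δ : Matrix m n R →ₗ[R] Matrix m n R} {A : Matrix m m R} {B : Matrix n n R}

theorem mul_mul_eq_zero_of_eq_mul_add_mul (hδ : IsTripleDerivation δ)
    (hAB : ∀ X, δ X = A * X + X * B) (X Y Z : Matrix m n R) :
    X * ((B + Bᴴ) * Yᴴ + Yᴴ * (A + Aᴴ)) * Z = 0 := by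
  have h := hδ X Y Z
  simp only [hAB, conjTranspose_add, conjTranspose_mul] at h
  calc X * ((B + Bᴴ) * Yᴴ + Yᴴ * (A + Aᴴ)) * Z
      = (A * X + X * B) * Yᴴ * Z + X * (Yᴴ * Aᴴ + Bᴴ * Yᴴ) * Z + X * Yᴴ * (A * Z + Z * B)
        - (A * (X * Yᴴ * Z) + X * Yᴴ * Z * B) := by
        simp only [Matrix.mul_add, Matrix.add_mul, Matrix.mul_assoc]
        abel
    _ = 0 := by rw [h, sub_self]

variable [DecidableEq m] [DecidableEq n]

theorem exists_eq_mul_add_mul (hδ : IsTripleDerivation δ) (i₀ : m) (j₀ : n) :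
    ∃ (A : Matrix m m R) (B : Matrix n n R), ∀ X, δ X = A * X + X * B := by
  -- the scalar term comes from the middle summand `E_{p j₀} (δ E_{i₀ j₀})ᴴ E_{i₀ u}`
  let A : Matrix m m R := of (fun i p => δ (single p j₀ 1) i j₀) +
    star (δ (single i₀ j₀ 1) i₀ j₀) • 1
  let B : Matrix n n R := of fun u j => δ (single i₀ u 1) i₀ j
  refine ⟨A, B, fun X => ?_⟩
  suffices δ = mulLeftLinearMap n R A + mulRightLinearMap m R B from congr($this X)
  refine ext_linearMap (R := R) fun p u => LinearMap.ext_ring ?_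
  have h := hδ (single p j₀ 1) (single i₀ j₀ 1) (single i₀ u 1)
  simp only [conjTranspose_single, star_one, single_mul_single_same, mul_one] at h
  simp only [LinearMap.comp_apply, singleLinearMap_apply, h, LinearMap.add_apply,
    mulLeftLinearMap_apply, mulRightLinearMap_apply, Matrix.mul_assoc, single_mul_single_same,
    mul_one, A, Matrix.add_mul, Matrix.smul_mul, Matrix.one_mul]
  ext i j
  by_cases hi : i = p <;> by_cases hj : j = u <;>
    simp [hi, hj, B, single_apply_of_ne, eq_comm (a := p), eq_comm (a := u)]

theorem add_conjTranspose_mul_add_eq_zero [Nonempty m] [Nonempty n] (hδ : IsTripleDerivation δ)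
    (hAB : ∀ X, δ X = A * X + X * B) (Y : Matrix m n R) :
    (A + Aᴴ) * Y + Y * (B + Bᴴ) = 0 := by
  have h := eq_zero_of_forall_mul_mul_eq_zero (hδ.mul_mul_eq_zero_of_eq_mul_add_mul hAB · Y ·)
  simpa [conjTranspose_add, conjTranspose_mul, add_comm] using congr_arg conjTranspose h

end IsTripleDerivation

theorem IsTripleDerivation.exists_skewHermitian {K : Type*} [Field K] [StarRing K]
    [NeZero (2 : K)] [DecidableEq m] [DecidableEq n] {δ : Matrix m n K →ₗ[K] Matrix m n K}
    (hδ : IsTripleDerivation δ) :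
    ∃ (A : Matrix m m K) (B : Matrix n n K), Aᴴ = -A ∧ Bᴴ = -B ∧ ∀ X, δ X = A * X + X * B := by
  rcases isEmpty_or_nonempty m with hm | hm
  · exact ⟨0, 0, by simp, by simp, fun X => Subsingleton.elim _ _⟩
  rcases isEmpty_or_nonempty n with hn | hn
  · exact ⟨0, 0, by simp, by simp, fun X => Subsingleton.elim _ _⟩
  obtain ⟨A, B, hAB⟩ := hδ.exists_eq_mul_add_mul hm.some hn.some
  refine ⟨(2⁻¹ : K) • (A - Aᴴ), (2⁻¹ : K) • (B - Bᴴ), ?_, ?_, fun X => ?_⟩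
  · simp [conjTranspose_smul, star_inv₀, ← smul_neg]
  · simp [conjTranspose_smul, star_inv₀, ← smul_neg]
  calc δ X = (2⁻¹ : K) • (A - Aᴴ) * X + X * (2⁻¹ : K) • (B - Bᴴ)
        + (2⁻¹ : K) • ((A + Aᴴ) * X + X * (B + Bᴴ)) := by
        rw [hAB]
        simp only [Matrix.smul_mul, Matrix.mul_smul, Matrix.sub_mul, Matrix.mul_sub,
          Matrix.add_mul, Matrix.mul_add, smul_add]
        match_scalars <;> field_simp <;> ring
    _ = _ := by rw [hδ.add_conjTranspose_mul_add_eq_zero hAB X, smul_zero, add_zero]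

end Matrix

/-- Every derivation of `M_{m,n}(ℂ)` with respect to the triple matrix multiplication
`(A, B, C) ↦ AB*C` is a finite sum of derivations of the form `X ↦ AX + XB` with
`A* = −A` and `B* = −B`. -/
theorem triple_matrix_derivation (m n : ℕ)
    (δ : Matrix (Fin m) (Fin n) ℂ →ₗ[ℂ] Matrix (Fin m) (Fin n) ℂ)
    (hδ : ∀ A B C : Matrix (Fin m) (Fin n) ℂ,
      δ (A * Bᴴ * C) = δ A * Bᴴ * C + A * (δ B)ᴴ * C + A * Bᴴ * δ C) :
    ∃ (k : ℕ) (A : Fin k → Matrix (Fin m) (Fin m) ℂ)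
      (B : Fin k → Matrix (Fin n) (Fin n) ℂ),
      (∀ i, (A i)ᴴ = -(A i)) ∧ (∀ i, (B i)ᴴ = -(B i)) ∧
      ∀ X, δ X = ∑ i, (A i * X + X * B i) := by
  obtain ⟨A, B, hA, hB, hAB⟩ := Matrix.IsTripleDerivation.exists_skewHermitian hδ
  exact ⟨1, fun _ => A, fun _ => B, fun _ => hA, fun _ => hB, fun X => by simp [hAB]⟩
end

section
/- Equip M_{m,n}(ℂ) with the triple circle product {A, B, C} = (AB*C + CB*A)/2. Let δ : M_{m,n}(ℂ) → M_{m,n}(ℂ) be a ℂ-linear map which is a derivation with respect to this product, i.e., δ({A, B, C}) = {δ(A), B, C} + {A, δ(B), C} + {A, B, δ(C)} for all A, B, C. Then δ is a finite sum of inner derivations of the form δ_{A,B}(X) = {A, B, X} − {B, A, X} with A, B ∈ M_{m,n}(ℂ). -/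
/-!
On the matrix units `E p q = single p q 1`, the derivation identity at the triples
`(E p q, E p q, E r s)` and `(E p q, E p s, E r s)` forces `δ (E p q) = P * E p q + E p q * Q`,
where the skew-Hermitian `P` and `Q` are read off from the columns `δ (E p q₀)` and the rows
`δ (E p₀ q)`; by linearity `δ X = P * X + X * Q`.

Conversely, `{A, B, X} - {B, A, X} = ½ ((A B* - B A*) X + X (B* A - A* B))`. Summed over
`A = P E r q₀, B = E r q₀` this gives `X ↦ P X + tr P • X E q₀ q₀`, and summed over
`A = E p₀ s Q, B = E p₀ s` it gives `X ↦ tr Q • E p₀ p₀ X + X Q`. Moving an imaginary multiple of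
the identity from `Q` to `P` does not change `X ↦ P X + X Q` and achieves `tr P = tr Q`; then
`P - tr Q • E p₀ p₀` is traceless and skew-Hermitian, and the two corner terms cancel.
-/

open scoped Matrix

noncomputable def tripleCircle {m n : ℕ} (A B C : Matrix (Fin m) (Fin n) ℂ) :
    Matrix (Fin m) (Fin n) ℂ :=
  (2⁻¹ : ℂ) • (A * Bᴴ * C + C * Bᴴ * A)

open Matrix ComplexConjugate

lemma Matrix.mul_single_mul_apply {l m n o α : Type*} [Fintype m] [Fintype n]
    [DecidableEq m] [DecidableEq n] [NonAssocSemiring α]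
    (A : Matrix l m α) (C : Matrix n o α) (p : m) (q : n) (i : l) (j : o) :
    (A * single p q (1 : α) * C) i j = A i p * C q j := by
  simp [mul_apply, single_apply, ite_and]

lemma Matrix.sum_single {ι m n α : Type*} [Fintype ι] [DecidableEq m] [DecidableEq n]
    [AddCommMonoid α] (i : m) (j : n) (f : ι → α) :
    ∑ r, single i j (f r) = single i j (∑ r, f r) :=
  (map_sum (singleAddMonoidHom i j) f _).symm

lemma Matrix.star_trace_of_conjTranspose_eq_neg {n α : Type*} [Fintype n] [AddCommGroup α]
    [StarAddMonoid α] {P : Matrix n n α} (hP : Pᴴ = -P) : star (trace P) = -trace P := by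
  rw [← trace_conjTranspose, hP, trace_neg]

section

variable {m n : ℕ}

lemma tripleCircle_single_apply (A C : Matrix (Fin m) (Fin n) ℂ) (p : Fin m) (q : Fin n)
    (i : Fin m) (j : Fin n) :
    tripleCircle A (single p q 1) C i j = 2⁻¹ * (A i q * C p j + C i q * A p j) := by
  simp [tripleCircle, mul_single_mul_apply]

lemma single_tripleCircle_single (M : Matrix (Fin m) (Fin n) ℂ) (p u : Fin m) (q v : Fin n) :
    tripleCircle (single p q 1) M (single u v 1) =
      (2⁻¹ : ℂ) • (single p v (conj (M u q)) + single u q (conj (M p v))) := by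
  simp [tripleCircle]

lemma map_tripleCircle_single_single {V : Type*} [AddCommMonoid V] [Module ℂ V]
    (f : Matrix (Fin m) (Fin n) ℂ →ₗ[ℂ] V)
    (M : Matrix (Fin m) (Fin n) ℂ) (p u : Fin m) (q v : Fin n) :
    f (tripleCircle (single p q 1) M (single u v 1)) =
      (2⁻¹ : ℂ) • (conj (M u q) • f (single p v 1) + conj (M p v) • f (single u q 1)) := by
  rw [single_tripleCircle_single, ← mul_one (conj (M u q)), ← mul_one (conj (M p v)),
    ← smul_eq_mul, ← smul_eq_mul, ← smul_single, ← smul_single, map_smul, map_add, map_smul,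
    map_smul]
  simp only [smul_eq_mul, mul_one]

def IsTripleCircleDerivation (δ : Matrix (Fin m) (Fin n) ℂ →ₗ[ℂ] Matrix (Fin m) (Fin n) ℂ) :
    Prop :=
  ∀ A B C, δ (tripleCircle A B C) =
    tripleCircle (δ A) B C + tripleCircle A (δ B) C + tripleCircle A B (δ C)

namespace IsTripleCircleDerivation

variable {δ : Matrix (Fin m) (Fin n) ℂ →ₗ[ℂ] Matrix (Fin m) (Fin n) ℂ}
  (hδ : IsTripleCircleDerivation δ)
include hδ

lemma apply_single_apply_of_ne {p i : Fin m} {q j : Fin n} (hi : i ≠ p) (hj : j ≠ q) :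
    δ (single p q 1) i j = 0 := by
  have h := congr($(hδ (single p q 1) (single p q 1) (single p q 1)) i j)
  rw [map_tripleCircle_single_single] at h
  simpa [single_tripleCircle_single, tripleCircle_single_apply, Ne.symm hi, Ne.symm hj] using h

lemma conj_apply_single_self (p : Fin m) (q : Fin n) :
    conj (δ (single p q 1) p q) = -δ (single p q 1) p q := by
  have h := congr($(hδ (single p q 1) (single p q 1) (single p q 1)) p q)
  rw [map_tripleCircle_single_single] at h
  simp [single_tripleCircle_single, tripleCircle_single_apply] at h
  linear_combination h

lemma conj_apply_single_col (p r : Fin m) (q : Fin n) :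
    conj (δ (single p q 1) r q) = -δ (single r q 1) p q := by
  rcases eq_or_ne p r with rfl | hpr
  · exact hδ.conj_apply_single_self p q
  have h := congr($(hδ (single p q 1) (single p q 1) (single r q 1)) p q)
  rw [map_tripleCircle_single_single] at h
  simp [single_tripleCircle_single, tripleCircle_single_apply, hpr, Ne.symm hpr] at h
  linear_combination -2 * h

lemma conj_apply_single_row (p : Fin m) (q s : Fin n) :
    conj (δ (single p q 1) p s) = -δ (single p s 1) p q := by
  rcases eq_or_ne q s with rfl | hqs
  · exact hδ.conj_apply_single_self p q
  have h := congr($(hδ (single p q 1) (single p q 1) (single p s 1)) p q)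
  rw [map_tripleCircle_single_single] at h
  simp [single_tripleCircle_single, tripleCircle_single_apply, hqs, Ne.symm hqs] at h
  linear_combination -2 * h

lemma apply_single_apply_col {p i : Fin m} (hi : i ≠ p) (q s : Fin n) :
    δ (single p s 1) i s = δ (single p q 1) i q := by
  rcases eq_or_ne q s with rfl | hqs
  · rfl
  have h := congr($(hδ (single p q 1) (single p q 1) (single p s 1)) i s)
  rw [map_tripleCircle_single_single] at h
  simpa [single_tripleCircle_single, tripleCircle_single_apply, Ne.symm hi, hqs, Ne.symm hqs]
    using h

lemma apply_single_apply_row (p r : Fin m) {q j : Fin n} (hj : j ≠ q) :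
    δ (single r q 1) r j = δ (single p q 1) p j := by
  rcases eq_or_ne p r with rfl | hpr
  · rfl
  have h := congr($(hδ (single p q 1) (single p q 1) (single r q 1)) r j)
  rw [map_tripleCircle_single_single] at h
  simpa [single_tripleCircle_single, tripleCircle_single_apply, Ne.symm hj, hpr, Ne.symm hpr]
    using h

lemma apply_single_self_add_apply_single_self (p r : Fin m) (q s : Fin n) :
    δ (single r q 1) r q + δ (single p s 1) p s =
      δ (single p q 1) p q + δ (single r s 1) r s := by
  rcases eq_or_ne p r with rfl | hpr
  · ring
  rcases eq_or_ne q s with rfl | hqs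
  · ring
  have h := congr($(hδ (single p q 1) (single p s 1) (single r s 1)) r q)
  rw [map_tripleCircle_single_single] at h
  simp [single_tripleCircle_single, tripleCircle_single_apply, hpr, Ne.symm hpr, hqs,
    Ne.symm hqs] at h
  linear_combination 2 * h + hδ.conj_apply_single_self p s

lemma conjTranspose_of_apply_single_col (q₀ : Fin n) :
    (of fun i p => δ (single p q₀ 1) i q₀)ᴴ = -of fun i p => δ (single p q₀ 1) i q₀ := by
  ext i p
  simp [hδ.conj_apply_single_col]

lemma conjTranspose_of_apply_single_row (p₀ : Fin m) :
    (of fun q j => δ (single p₀ q 1) p₀ j)ᴴ = -of fun q j => δ (single p₀ q 1) p₀ j := by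
  ext q j
  simp [hδ.conj_apply_single_row]

lemma exists_conjTranspose_eq_neg_and_eq_mul_add_mul (p₀ : Fin m) (q₀ : Fin n) :
    ∃ (P : Matrix (Fin m) (Fin m) ℂ) (Q : Matrix (Fin n) (Fin n) ℂ),
      Pᴴ = -P ∧ Qᴴ = -Q ∧ ∀ X, δ X = P * X + X * Q := by
  set c := δ (single p₀ q₀ 1) p₀ q₀ / 2
  have hc : conj c = -c := by
    simp [c, map_div₀, hδ.conj_apply_single_self, neg_div, map_ofNat]
  set P : Matrix (Fin m) (Fin m) ℂ := (of fun i p => δ (single p q₀ 1) i q₀) - c • 1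
  set Q : Matrix (Fin n) (Fin n) ℂ := (of fun q j => δ (single p₀ q 1) p₀ j) - c • 1
  refine ⟨P, Q, ?_, ?_, ?_⟩
  · rw [conjTranspose_sub, hδ.conjTranspose_of_apply_single_col, conjTranspose_smul,
      conjTranspose_one, Complex.star_def, hc, neg_smul, neg_sub_neg, neg_sub]
  · rw [conjTranspose_sub, hδ.conjTranspose_of_apply_single_row, conjTranspose_smul,
      conjTranspose_one, Complex.star_def, hc, neg_smul, neg_sub_neg, neg_sub]
  have hsingle : ∀ p q, δ (single p q 1) = P * single p q (1 : ℂ) + single p q (1 : ℂ) * Q := by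
    intro p q
    ext i j
    rcases eq_or_ne i p with rfl | hi <;> rcases eq_or_ne j q with rfl | hj
    · simp only [P, Q, c, Matrix.add_apply, Matrix.sub_apply, Matrix.smul_apply, of_apply,
        mul_single_apply_same, single_mul_apply_same, one_apply_eq, smul_eq_mul, mul_one, one_mul]
      linear_combination hδ.apply_single_self_add_apply_single_self p₀ i j q₀
    · simp [P, Q, hj, one_apply_ne hj.symm, hδ.apply_single_apply_row p₀ i hj]
    · simp [P, Q, hi, hδ.apply_single_apply_col hi q₀ j]
    · simp [P, Q, hi, hj, hδ.apply_single_apply_of_ne hi hj]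
  intro X
  induction X using Matrix.induction_on' with
  | h_zero => simp
  | h_add X Y hX hY => rw [map_add, hX, hY, Matrix.mul_add, Matrix.add_mul]; abel
  | h_std_basis p q x =>
    rw [← mul_one x, ← smul_eq_mul, ← smul_single, map_smul, hsingle]
    simp only [Matrix.mul_smul, Matrix.smul_mul, smul_add]

end IsTripleCircleDerivation

noncomputable def innerDerivation (A B X : Matrix (Fin m) (Fin n) ℂ) : Matrix (Fin m) (Fin n) ℂ :=
  tripleCircle A B X - tripleCircle B A X

lemma innerDerivation_eq (A B X : Matrix (Fin m) (Fin n) ℂ) :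
    innerDerivation A B X =
      (2⁻¹ : ℂ) • ((A * Bᴴ - B * Aᴴ) * X + X * (Bᴴ * A - Aᴴ * B)) := by
  simp only [innerDerivation, tripleCircle, Matrix.sub_mul, Matrix.mul_sub, Matrix.mul_assoc]
  module

lemma sum_innerDerivation_mul_single {P : Matrix (Fin m) (Fin m) ℂ} (hP : Pᴴ = -P) (q₀ : Fin n)
    (X : Matrix (Fin m) (Fin n) ℂ) :
    ∑ r, innerDerivation (P * single r q₀ (1 : ℂ)) (single r q₀ (1 : ℂ)) X =
      P * X + trace P • (X * single q₀ q₀ (1 : ℂ)) := by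
  have hleft : ∑ r : Fin m, (P * single r q₀ (1 : ℂ) * (single r q₀ (1 : ℂ))ᴴ -
      single r q₀ (1 : ℂ) * (P * single r q₀ (1 : ℂ))ᴴ) = (2 : ℂ) • P :=
    calc _ = ∑ r : Fin m, (P * single r r (1 : ℂ) - single r r (1 : ℂ) * Pᴴ) := by
          simp [conjTranspose_mul, Matrix.mul_assoc P, ← Matrix.mul_assoc (single _ q₀ _)]
      _ = P - Pᴴ := by
          rw [Finset.sum_sub_distrib, ← Finset.mul_sum, ← Finset.sum_mul, sum_single_one,
            Matrix.mul_one, Matrix.one_mul]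
      _ = (2 : ℂ) • P := by rw [hP, sub_neg_eq_add, two_smul]
  have hright : ∑ r : Fin m, ((single r q₀ (1 : ℂ))ᴴ * (P * single r q₀ (1 : ℂ)) -
      (P * single r q₀ (1 : ℂ))ᴴ * single r q₀ (1 : ℂ)) = (2 * trace P) • single q₀ q₀ (1 : ℂ) :=
    calc _ = ∑ r : Fin m, (single q₀ q₀ (P r r) - single q₀ q₀ (Pᴴ r r)) := by
          simp [← Matrix.mul_assoc, conjTranspose_mul]
      _ = single q₀ q₀ (trace P) - single q₀ q₀ (trace Pᴴ) := by
          rw [Finset.sum_sub_distrib, sum_single, sum_single]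
          rfl
      _ = (2 * trace P) • single q₀ q₀ (1 : ℂ) := by
          rw [hP, trace_neg, ← single_neg, sub_neg_eq_add, ← single_add, smul_single, smul_eq_mul,
            mul_one, two_mul]
  simp_rw [innerDerivation_eq]
  rw [← Finset.smul_sum, Finset.sum_add_distrib, ← Matrix.sum_mul, ← Matrix.mul_sum, hleft, hright,
    Matrix.smul_mul, Matrix.mul_smul]
  module

lemma sum_innerDerivation_single_mul {Q : Matrix (Fin n) (Fin n) ℂ} (hQ : Qᴴ = -Q) (p₀ : Fin m)
    (X : Matrix (Fin m) (Fin n) ℂ) :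
    ∑ s, innerDerivation (single p₀ s (1 : ℂ) * Q) (single p₀ s (1 : ℂ)) X =
      trace Q • (single p₀ p₀ (1 : ℂ) * X) + X * Q := by
  have hleft : ∑ s : Fin n, (single p₀ s (1 : ℂ) * Q * (single p₀ s (1 : ℂ))ᴴ -
      single p₀ s (1 : ℂ) * (single p₀ s (1 : ℂ) * Q)ᴴ) = (2 * trace Q) • single p₀ p₀ (1 : ℂ) :=
    calc _ = ∑ s : Fin n, (single p₀ p₀ (Q s s) - single p₀ p₀ (Qᴴ s s)) := by
          simp [conjTranspose_mul, ← Matrix.mul_assoc]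
      _ = single p₀ p₀ (trace Q) - single p₀ p₀ (trace Qᴴ) := by
          rw [Finset.sum_sub_distrib, sum_single, sum_single]
          rfl
      _ = (2 * trace Q) • single p₀ p₀ (1 : ℂ) := by
          rw [hQ, trace_neg, ← single_neg, sub_neg_eq_add, ← single_add, smul_single, smul_eq_mul,
            mul_one, two_mul]
  have hright : ∑ s : Fin n, ((single p₀ s (1 : ℂ))ᴴ * (single p₀ s (1 : ℂ) * Q) -
      (single p₀ s (1 : ℂ) * Q)ᴴ * single p₀ s (1 : ℂ)) = (2 : ℂ) • Q :=
    calc _ = ∑ s : Fin n, (single s s (1 : ℂ) * Q - Qᴴ * single s s (1 : ℂ)) := by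
          simp [conjTranspose_mul, ← Matrix.mul_assoc, Matrix.mul_assoc Qᴴ]
      _ = Q - Qᴴ := by
          rw [Finset.sum_sub_distrib, ← Finset.mul_sum, ← Finset.sum_mul, sum_single_one,
            Matrix.mul_one, Matrix.one_mul]
      _ = (2 : ℂ) • Q := by rw [hQ, sub_neg_eq_add, two_smul]
  simp_rw [innerDerivation_eq]
  rw [← Finset.smul_sum, Finset.sum_add_distrib, ← Matrix.sum_mul, ← Matrix.mul_sum, hleft, hright,
    Matrix.smul_mul, Matrix.mul_smul]
  module

def IsSumOfInnerDerivations (f : Matrix (Fin m) (Fin n) ℂ → Matrix (Fin m) (Fin n) ℂ) : Prop :=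
  ∃ (k : ℕ) (A B : Fin k → Matrix (Fin m) (Fin n) ℂ), ∀ X, f X = ∑ i, innerDerivation (A i) (B i) X

lemma isSumOfInnerDerivations_sum {ι : Type*} [Fintype ι] (A B : ι → Matrix (Fin m) (Fin n) ℂ) :
    IsSumOfInnerDerivations fun X => ∑ i, innerDerivation (A i) (B i) X := by
  let e := Fintype.equivFin ι
  exact ⟨Fintype.card ι, A ∘ e.symm, B ∘ e.symm, fun X => (e.symm.sum_comp _).symm⟩

lemma isSumOfInnerDerivations_of_trace_eq {P : Matrix (Fin m) (Fin m) ℂ}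
    {Q : Matrix (Fin n) (Fin n) ℂ} (hP : Pᴴ = -P) (hQ : Qᴴ = -Q) (htr : trace P = trace Q)
    (p₀ : Fin m) (q₀ : Fin n) :
    IsSumOfInnerDerivations fun X : Matrix (Fin m) (Fin n) ℂ => P * X + X * Q := by
  set P' := P - trace Q • single p₀ p₀ (1 : ℂ)
  have hP' : P'ᴴ = -P' := by
    simp only [P', conjTranspose_sub, conjTranspose_smul, conjTranspose_single, hP,
      star_trace_of_conjTranspose_eq_neg hQ, star_one]
    module
  have htr' : trace P' = 0 := by simp [P', htr]
  convert isSumOfInnerDerivations_sum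
    (Sum.elim (fun r => P' * single r q₀ (1 : ℂ)) fun s => single p₀ s (1 : ℂ) * Q)
    (Sum.elim (fun r => single r q₀ (1 : ℂ)) fun s => single p₀ s (1 : ℂ)) using 2 with X
  rw [Fintype.sum_sum_type]
  simp only [Sum.elim_inl, Sum.elim_inr, sum_innerDerivation_mul_single hP',
    sum_innerDerivation_single_mul hQ, htr', zero_smul, add_zero]
  rw [Matrix.sub_mul, Matrix.smul_mul]
  abel

lemma isSumOfInnerDerivations_mul_add_mul {P : Matrix (Fin m) (Fin m) ℂ}
    {Q : Matrix (Fin n) (Fin n) ℂ} (hP : Pᴴ = -P) (hQ : Qᴴ = -Q) (p₀ : Fin m) (q₀ : Fin n) :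
    IsSumOfInnerDerivations fun X : Matrix (Fin m) (Fin n) ℂ => P * X + X * Q := by
  have hmn : (m + n : ℂ) ≠ 0 := by
    have := p₀.pos
    exact_mod_cast (by omega : m + n ≠ 0)
  set t := (trace Q - trace P) / (m + n)
  have ht : star t = -t := by
    simp only [t, star_div₀, star_sub, star_trace_of_conjTranspose_eq_neg hP,
      star_trace_of_conjTranspose_eq_neg hQ, star_add, star_natCast]
    ring
  have hP₁ : (P + t • 1)ᴴ = -(P + t • 1) := by
    rw [conjTranspose_add, conjTranspose_smul, conjTranspose_one, hP, ht, neg_smul, neg_add]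
  have hQ₁ : (Q - t • 1)ᴴ = -(Q - t • 1) := by
    rw [conjTranspose_sub, conjTranspose_smul, conjTranspose_one, hQ, ht, neg_smul, neg_sub_neg,
      neg_sub]
  have htr : trace (P + t • 1) = trace (Q - t • 1) := by
    simp only [trace_add, trace_sub, trace_smul, trace_one, Fintype.card_fin, smul_eq_mul, t]
    field_simp
    ring
  convert isSumOfInnerDerivations_of_trace_eq hP₁ hQ₁ htr p₀ q₀ using 2 with X
  rw [Matrix.add_mul, Matrix.mul_sub, Matrix.smul_mul, Matrix.mul_smul, Matrix.one_mul,
    Matrix.mul_one]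
  abel

end

/-- Every derivation of `M_{m,n}(ℂ)` with respect to the triple circle product
`{A, B, C} = (AB*C + CB*A)/2` is a finite sum of inner derivations
`X ↦ {A, B, X} − {B, A, X}`. -/
theorem triple_circle_derivation_inner (m n : ℕ)
    (δ : Matrix (Fin m) (Fin n) ℂ →ₗ[ℂ] Matrix (Fin m) (Fin n) ℂ)
    (hδ : ∀ A B C : Matrix (Fin m) (Fin n) ℂ,
      δ (tripleCircle A B C) =
        tripleCircle (δ A) B C + tripleCircle A (δ B) C + tripleCircle A B (δ C)) :
    ∃ (k : ℕ) (A B : Fin k → Matrix (Fin m) (Fin n) ℂ),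
      ∀ X, δ X = ∑ i, (tripleCircle (A i) (B i) X - tripleCircle (B i) (A i) X) := by
  rcases isEmpty_or_nonempty (Fin m) with _ | ⟨⟨p₀⟩⟩
  · exact ⟨0, Fin.elim0, Fin.elim0, fun _ => Subsingleton.elim _ _⟩
  rcases isEmpty_or_nonempty (Fin n) with _ | ⟨⟨q₀⟩⟩
  · exact ⟨0, Fin.elim0, Fin.elim0, fun _ => Subsingleton.elim _ _⟩
  obtain ⟨P, Q, hP, hQ, hδPQ⟩ :=
    IsTripleCircleDerivation.exists_conjTranspose_eq_neg_and_eq_mul_add_mul hδ p₀ q₀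
  obtain ⟨k, A, B, hAB⟩ := isSumOfInnerDerivations_mul_add_mul hP hQ p₀ q₀
  exact ⟨k, A, B, fun X => (hδPQ X).trans (hAB X)⟩
end

section
/- (Zalar) Let H and K be complex Hilbert spaces and let W ⊆ B(H, K) be a ternary ring of operators (a norm-closed linear subspace with xy*z ∈ W whenever x, y, z ∈ W) which contains all compact operators from H to K. If D : W → W is a linear map which is a derivation with respect to the associative triple product, i.e., D(xy*z) = D(x)y*z + xD(y)*z + xy*D(z) for all x, y, z ∈ W, then there exist a ∈ B(K) with a* = −a and b ∈ B(H) with b* = −b such that D(x) = ax + xb for all x ∈ W. -/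
/-!
The rank-one operators `θ k h = ⟪h, ·⟫ • k` lie in `W`. Fix unit vectors `p ∈ H`, `q ∈ K`.
Testing the derivation identity on `θ q h`, `y`, `θ k p` and pairing the result with `q` at `p`
expresses `⟪D y h, k⟫` through `y` alone, by terms continuous in `y`; the closed graph theorem
then makes `D` bounded, and the same identity reads `D y = a y + y b` with bounded `a`, `b`.
Substituting this back into the derivation identity on rank-one operators forces
`b + b* = μ` and `a + a* = -μ` for a real scalar `μ`, and shifting `a` and `b` by `± μ / 2`
makes both skew-adjoint.
-/

open ContinuousLinearMap InnerProductSpace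

theorem LinearMap.continuous_of_continuous_comp_injective {𝕜 E F X : Type*}
    [NontriviallyNormedField 𝕜] [NormedAddCommGroup E] [NormedSpace 𝕜 E] [CompleteSpace E]
    [NormedAddCommGroup F] [NormedSpace 𝕜 F] [CompleteSpace F]
    [TopologicalSpace X] [T2Space X] (f : E →ₗ[𝕜] F) {φ : F → X} (hφ : Continuous φ)
    (hinj : Function.Injective φ) (hf : Continuous (φ ∘ f)) : Continuous f :=
  f.continuous_of_seq_closed_graph fun _ x y hu hfu =>
    hinj <| tendsto_nhds_unique ((hφ.tendsto y).comp hfu) ((hf.tendsto x).comp hu)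

section

variable {𝕜 H K : Type*} [RCLike 𝕜]
  [NormedAddCommGroup H] [InnerProductSpace 𝕜 H] [NormedAddCommGroup K] [InnerProductSpace 𝕜 K]

theorem InnerProductSpace.isCompactOperator_rankOne (k : K) (h : H) :
    IsCompactOperator (rankOne 𝕜 k h) :=
  (isCompactOperator_of_locallyCompactSpace_dom (innerSL 𝕜 h)).clm_comp (toSpanSingleton 𝕜 k)

theorem eq_smul_id_of_inner_mul_add_inner_mul_eq_zero {p : H} {q : K} (hp : ‖p‖ = 1)
    (hq : ‖q‖ = 1) {S : H →L[𝕜] H} {R : K →L[𝕜] K}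
    (hSR : ∀ (h₁ h₂ : H) (k₂ k₃ : K),
      inner 𝕜 k₂ k₃ * inner 𝕜 h₁ (S h₂) + inner 𝕜 h₁ h₂ * inner 𝕜 k₂ (R k₃) = 0) :
    S = inner 𝕜 p (S p) • ContinuousLinearMap.id 𝕜 H ∧
      R = -inner 𝕜 p (S p) • ContinuousLinearMap.id 𝕜 K := by
  have hp' : inner 𝕜 p p = (1 : 𝕜) := by simp [hp]
  have hq' : inner 𝕜 q q = (1 : 𝕜) := by simp [hq]
  have hR : R = -inner 𝕜 p (S p) • ContinuousLinearMap.id 𝕜 K := by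
    ext k₃
    refine ext_inner_left 𝕜 fun k₂ => ?_
    have := hSR p p k₂ k₃
    rw [hp'] at this
    simp only [smul_apply, id_apply, inner_smul_right]
    linear_combination this
  refine ⟨?_, hR⟩
  ext h₂
  refine ext_inner_left 𝕜 fun h₁ => ?_
  have := hSR h₁ h₂ q q
  simp only [hR, hq', smul_apply, id_apply, inner_smul_right] at this ⊢
  linear_combination this

variable {W : Submodule 𝕜 (H →L[𝕜] K)}

noncomputable def rankOneMem (hrank : ∀ (k : K) (h : H), rankOne 𝕜 k h ∈ W) (k : K) (h : H) : W :=
  ⟨rankOne 𝕜 k h, hrank k h⟩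

@[simp]
theorem coe_rankOneMem (hrank : ∀ (k : K) (h : H), rankOne 𝕜 k h ∈ W) (k : K) (h : H) :
    (rankOneMem hrank k h : H →L[𝕜] K) = rankOne 𝕜 k h :=
  rfl

variable [CompleteSpace H] [CompleteSpace K]

theorem InnerProductSpace.rankOne_comp_add_comp_rankOne (S : H →L[𝕜] H) (R : K →L[𝕜] K)
    (k₁ k₂ k₃ : K) (h₁ h₂ h₃ : H) :
    rankOne 𝕜 k₁ h₁ ∘L (S ∘L adjoint (rankOne 𝕜 k₂ h₂) + adjoint (rankOne 𝕜 k₂ h₂) ∘L R) ∘L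
      rankOne 𝕜 k₃ h₃ =
      (inner 𝕜 k₂ k₃ * inner 𝕜 h₁ (S h₂) + inner 𝕜 h₁ h₂ * inner 𝕜 k₂ (R k₃)) •
        rankOne 𝕜 k₁ h₃ := by
  simp [comp_add, comp_rankOne, rankOne_comp, add_smul, smul_smul, adjoint_inner_left, mul_comm]

theorem exists_skewAdjoint_of_add_adjoint_eq_smul_id {a : K →L[𝕜] K} {b : H →L[𝕜] H} {μ : 𝕜}
    (hμ : starRingEnd 𝕜 μ = μ) (ha : a + adjoint a = -μ • ContinuousLinearMap.id 𝕜 K)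
    (hb : b + adjoint b = μ • ContinuousLinearMap.id 𝕜 H) :
    ∃ (a' : K →L[𝕜] K) (b' : H →L[𝕜] H), adjoint a' = -a' ∧ adjoint b' = -b' ∧
      ∀ x : H →L[𝕜] K, a ∘L x + x ∘L b = a' ∘L x + x ∘L b' := by
  have hμ2 : starRingEnd 𝕜 (μ / 2) = μ / 2 := by simp [map_div₀, hμ, map_ofNat]
  refine ⟨a + (μ / 2) • ContinuousLinearMap.id 𝕜 K, b - (μ / 2) • ContinuousLinearMap.id 𝕜 H,
    ?_, ?_, fun x => ?_⟩
  · rw [map_add, adjoint.map_smulₛₗ, adjoint_id, hμ2, eq_sub_of_add_eq' ha]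
    module
  · rw [map_sub, adjoint.map_smulₛₗ, adjoint_id, hμ2, eq_sub_of_add_eq' hb]
    module
  · simp only [add_comp, comp_sub, smul_comp, comp_smul, id_comp, comp_id]
    abel

variable (W) in
def IsTripleDerivation (htriple : ∀ x y z, x ∈ W → y ∈ W → z ∈ W → x ∘L (adjoint y ∘L z) ∈ W)
    (D : W →ₗ[𝕜] W) : Prop :=
  ∀ x y z : W, (D ⟨x ∘L (adjoint (y : H →L[𝕜] K) ∘L z), htriple x y z x.2 y.2 z.2⟩ : H →L[𝕜] K) =
    (D x : H →L[𝕜] K) ∘L (adjoint (y : H →L[𝕜] K) ∘L z) +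
      (x : H →L[𝕜] K) ∘L (adjoint (D y : H →L[𝕜] K) ∘L z) +
      (x : H →L[𝕜] K) ∘L (adjoint (y : H →L[𝕜] K) ∘L (D z : H →L[𝕜] K))

namespace IsTripleDerivation

variable {htriple : ∀ x y z, x ∈ W → y ∈ W → z ∈ W → x ∘L (adjoint y ∘L z) ∈ W}
  {D : W →ₗ[𝕜] W} (hD : IsTripleDerivation W htriple D)
include hD

theorem comp_add_adjoint_comp_eq_zero {a : K →L[𝕜] K} {b : H →L[𝕜] H}
    (hrep : ∀ y : W, (D y : H →L[𝕜] K) = a ∘L (y : H →L[𝕜] K) + (y : H →L[𝕜] K) ∘L b)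
    (x y z : W) :
    (x : H →L[𝕜] K) ∘L ((b + adjoint b) ∘L adjoint (y : H →L[𝕜] K) +
      adjoint (y : H →L[𝕜] K) ∘L (a + adjoint a)) ∘L (z : H →L[𝕜] K) = 0 := by
  have hder := hD x y z
  rw [hrep, hrep, hrep, hrep, ← sub_eq_zero] at hder
  rw [← neg_eq_zero, ← hder]
  simp only [map_add, adjoint_comp, add_comp, comp_add, comp_assoc]
  abel

section
variable (hrank : ∀ (k : K) (h : H), rankOne 𝕜 k h ∈ W) {p : H} {q : K}
  (hp : ‖p‖ = 1) (hq : ‖q‖ = 1)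
include hrank hp hq

theorem inner_apply (y : W) (h : H) (k : K) :
    inner 𝕜 ((D y : H →L[𝕜] K) h) k =
      inner 𝕜 q ((D (rankOneMem hrank q p) : H →L[𝕜] K) p) * inner 𝕜 ((y : H →L[𝕜] K) h) k -
        inner 𝕜 q ((D (rankOneMem hrank q h) : H →L[𝕜] K) (adjoint (y : H →L[𝕜] K) k)) -
        inner 𝕜 ((y : H →L[𝕜] K) h) ((D (rankOneMem hrank k p) : H →L[𝕜] K) p) := by
  have htr : (⟨(rankOneMem hrank q h : H →L[𝕜] K) ∘L
      (adjoint (y : H →L[𝕜] K) ∘L (rankOneMem hrank k p : H →L[𝕜] K)),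
      htriple _ _ _ (hrank q h) y.2 (hrank k p)⟩ : W) =
      inner 𝕜 ((y : H →L[𝕜] K) h) k • rankOneMem hrank q p := by
    ext1
    simp [comp_rankOne, adjoint_inner_right]
  have hder := congrArg (fun T : H →L[𝕜] K => inner 𝕜 q (T p))
    (hD (rankOneMem hrank q h) y (rankOneMem hrank k p))
  rw [htr, map_smul] at hder
  simp only [SetLike.val_smul, smul_apply, inner_smul_right, coe_rankOneMem, add_apply, comp_apply,
    rankOne_apply, inner_self_eq_norm_sq_to_K, hp, hq, map_one, one_pow, one_smul,
    adjoint_inner_right, inner_add_right, mul_one] at hder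
  linear_combination -hder

theorem continuous (hclosed : IsClosed (W : Set (H →L[𝕜] K))) : Continuous D := by
  have : CompleteSpace W := hclosed.completeSpace_coe
  refine D.continuous_of_continuous_comp_injective (𝕜 := 𝕜) (E := W) (F := W)
    (φ := fun (u : W) (h : H) (k : K) => inner 𝕜 ((u : H →L[𝕜] K) h) k) (by fun_prop)
    (fun u v huv => ?_) (continuous_pi fun h => continuous_pi fun k => ?_)
  · ext h
    exact ext_inner_right 𝕜 fun k => congrFun (congrFun huv h) k
  · simp only [Function.comp_def, hD.inner_apply hrank hp hq]
    fun_prop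

theorem exists_eq_comp_add_comp (hclosed : IsClosed (W : Set (H →L[𝕜] K))) :
    ∃ (a : K →L[𝕜] K) (b : H →L[𝕜] H), ∀ y : W,
      (D y : H →L[𝕜] K) = a ∘L (y : H →L[𝕜] K) + (y : H →L[𝕜] K) ∘L b := by
  let Dc : W →L[𝕜] W := ⟨D, hD.continuous hrank hp hq hclosed⟩
  obtain ⟨A, hA⟩ : ∃ A : K →L[𝕜] K, ∀ k, A k = (D (rankOneMem hrank k p) : H →L[𝕜] K) p :=
    ⟨apply 𝕜 K p ∘L W.subtypeL ∘L Dc ∘L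
      ((rankOne 𝕜 (E := K) (F := H)).flip p).codRestrict W (hrank · p), fun _ => rfl⟩
  obtain ⟨B, hB⟩ : ∃ B : H →L[𝕜] H, ∀ h,
      B h = adjoint (D (rankOneMem hrank q h) : H →L[𝕜] K) q :=
    ⟨(apply 𝕜 H q).comp <|
      (adjoint : (H →L[𝕜] K) ≃ₗᵢ⋆[𝕜] (K →L[𝕜] H)).toContinuousLinearEquiv.toContinuousLinearMap.comp
      ((W.subtypeL ∘L Dc).comp ((rankOne 𝕜 q).codRestrict W (hrank q))), fun _ => rfl⟩
  refine ⟨starRingEnd 𝕜 (inner 𝕜 q ((D (rankOneMem hrank q p) : H →L[𝕜] K) p)) •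
    ContinuousLinearMap.id 𝕜 K - adjoint A, -B, fun y => ?_⟩
  ext h
  refine ext_inner_right 𝕜 fun k => ?_
  have hBy : inner 𝕜 q ((D (rankOneMem hrank q h) : H →L[𝕜] K) (adjoint (y : H →L[𝕜] K) k)) =
      inner 𝕜 ((y : H →L[𝕜] K) (B h)) k := by
    rw [← adjoint_inner_right, hB, adjoint_inner_left]
  rw [hD.inner_apply hrank hp hq, hBy, ← hA k, ← adjoint_inner_left A]
  simp only [inner_conj_symm, sub_comp, smul_comp, id_comp, comp_neg, add_apply, sub_apply,
    smul_apply, comp_apply, neg_apply, inner_add_left, inner_sub_left, inner_smul_left,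
    inner_neg_left]
  ring

theorem exists_skewAdjoint (hclosed : IsClosed (W : Set (H →L[𝕜] K))) :
    ∃ (a : K →L[𝕜] K) (b : H →L[𝕜] H), adjoint a = -a ∧ adjoint b = -b ∧ ∀ y : W,
      (D y : H →L[𝕜] K) = a ∘L (y : H →L[𝕜] K) + (y : H →L[𝕜] K) ∘L b := by
  obtain ⟨a, b, hrep⟩ := hD.exists_eq_comp_add_comp hrank hp hq hclosed
  have hSR := eq_smul_id_of_inner_mul_add_inner_mul_eq_zero hp hq
    (S := b + adjoint b) (R := a + adjoint a) fun h₁ h₂ k₂ k₃ => by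
      have := hD.comp_add_adjoint_comp_eq_zero hrep (rankOneMem hrank q h₁)
        (rankOneMem hrank k₂ h₂) (rankOneMem hrank k₃ p)
      rw [coe_rankOneMem, coe_rankOneMem, coe_rankOneMem, rankOne_comp_add_comp_rankOne,
        smul_eq_zero] at this
      exact this.resolve_right (rankOne_ne_zero (by simp [← norm_ne_zero_iff, hq])
        (by simp [← norm_ne_zero_iff, hp]))
  have hμ : starRingEnd 𝕜 (inner 𝕜 p ((b + adjoint b) p)) = inner 𝕜 p ((b + adjoint b) p) := by
    rw [inner_conj_symm, ← adjoint_inner_right, map_add, adjoint_adjoint, add_comm]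
  obtain ⟨a', b', ha', hb', hab⟩ := exists_skewAdjoint_of_add_adjoint_eq_smul_id hμ hSR.2 hSR.1
  exact ⟨a', b', ha', hb', fun y => (hrep y).trans (hab y)⟩

end

end IsTripleDerivation

end

/-- (Zalar) If `W ⊆ B(H, K)` is a TRO containing all compact operators and `D : W → W`
is a derivation with respect to the associative triple product `xy*z`, then there exist
skew-adjoint `a ∈ B(K)` and `b ∈ B(H)` with `D x = ax + xb` for all `x ∈ W`. -/
theorem zalar_tro_derivation (H K : Type*)
    [NormedAddCommGroup H] [InnerProductSpace ℂ H] [CompleteSpace H]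
    [NormedAddCommGroup K] [InnerProductSpace ℂ K] [CompleteSpace K]
    (W : Submodule ℂ (H →L[ℂ] K)) (hclosed : IsClosed (W : Set (H →L[ℂ] K)))
    (htriple : ∀ x y z : H →L[ℂ] K, x ∈ W → y ∈ W → z ∈ W →
      x.comp ((ContinuousLinearMap.adjoint y).comp z) ∈ W)
    (hcompact : ∀ T : H →L[ℂ] K, IsCompactOperator T → T ∈ W)
    (D : W →ₗ[ℂ] W)
    (hD : ∀ x y z : W,
      (D ⟨(x : H →L[ℂ] K).comp ((ContinuousLinearMap.adjoint (y : H →L[ℂ] K)).comp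
          (z : H →L[ℂ] K)), htriple x y z x.2 y.2 z.2⟩ : H →L[ℂ] K) =
        (D x : H →L[ℂ] K).comp ((ContinuousLinearMap.adjoint (y : H →L[ℂ] K)).comp
          (z : H →L[ℂ] K)) +
        (x : H →L[ℂ] K).comp ((ContinuousLinearMap.adjoint (D y : H →L[ℂ] K)).comp
          (z : H →L[ℂ] K)) +
        (x : H →L[ℂ] K).comp ((ContinuousLinearMap.adjoint (y : H →L[ℂ] K)).comp
          (D z : H →L[ℂ] K))) :
    ∃ (a : K →L[ℂ] K) (b : H →L[ℂ] H),
      ContinuousLinearMap.adjoint a = -a ∧ ContinuousLinearMap.adjoint b = -b ∧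
      ∀ x : W, (D x : H →L[ℂ] K) =
        a.comp (x : H →L[ℂ] K) + (x : H →L[ℂ] K).comp b := by
  rcases subsingleton_or_nontrivial H with _ | _
  · exact ⟨0, 0, by simp, by simp, fun _ => Subsingleton.elim _ _⟩
  rcases subsingleton_or_nontrivial K with _ | _
  · exact ⟨0, 0, by simp, by simp, fun _ => Subsingleton.elim _ _⟩
  obtain ⟨p, hp⟩ := exists_norm_eq H zero_le_one
  obtain ⟨q, hq⟩ := exists_norm_eq K zero_le_one
  exact IsTripleDerivation.exists_skewAdjoint (htriple := htriple) hD
    (fun k h => hcompact _ (isCompactOperator_rankOne k h)) hp hq hclosed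
end
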